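/- arXiv:2209.09973 — 10 statements merged into one kernel-verified Lean document; each statement's English description precedes it below -/
import Mathlib

section
/- Let s, k, d be positive integers with s and k coprime and s ≥ 2. If k = 1, or if both k ≤ d and s ≤ d, then the maximum possible hook length of an (s,s+k)-core partition with d-distinct parts is H_d(s,k) = s − 1. -/
/-- A `D`-distinct `(S, S+K)`-core β-set: a finite nonempty set of positive integers,
closed under subtracting `S` and `S + K` (when the result stays positive, which is
automatic for elements of `P`), whose distinct elements differ by more than `D`. -/
def IsCoreBeta (S K D : ℕ) (B : Finset ℕ) : Prop :=
  B.Nonempty ∧ (∀ x ∈ B, 0 < x) ∧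
  (∀ x ∈ B, S ≤ x → x - S ∈ B) ∧
  (∀ x ∈ B, S + K ≤ x → x - (S + K) ∈ B) ∧
  (∀ x ∈ B, ∀ y ∈ B, x ≠ y → (D : ℤ) < |(x : ℤ) - (y : ℤ)|)

/-- All hook lengths attained by `D`-distinct `(S, S+K)`-core β-sets; its greatest
element is the maximum possible hook length `H_D(S, K)`. -/
def HookLengths (S K D : ℕ) : Set ℕ :=
  {n | ∃ B : Finset ℕ, IsCoreBeta S K D B ∧ n ∈ B}

theorem max_hook_case_I (s k d : ℕ) (hs : 2 ≤ s) (hk : 0 < k) (hd : 0 < d)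
    (hcop : Nat.Coprime s k) (hcase : k = 1 ∨ (k ≤ d ∧ s ≤ d)) :
    IsGreatest (HookLengths s k d) (s - 1) := by
  constructor
  · refine ⟨{s - 1}, ⟨⟨s - 1, Finset.mem_singleton_self _⟩, ?_, ?_, ?_, ?_⟩,
      Finset.mem_singleton_self _⟩
    · intro x hx; rw [Finset.mem_singleton] at hx; omega
    · intro x hx h; rw [Finset.mem_singleton] at hx; omega
    · intro x hx h; rw [Finset.mem_singleton] at hx; omega
    · intro x hx y hy hne; rw [Finset.mem_singleton] at hx hy; omega
  · rintro n ⟨B, ⟨hne, hpos, hS, hSK, hD⟩, hnB⟩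
    by_contra hlt
    push_neg at hlt
    have hn : s ≤ n := by omega
    rcases hcase with h1 | ⟨hkd, hsd⟩
    · subst h1
      rcases Nat.lt_or_ge n (s + 1) with h | h
      · have hn' : n = s := by omega
        have h0 : n - s ∈ B := hS n hnB hn
        have := hpos _ h0
        omega
      · have h1 := hS n hnB hn
        have h2 := hSK n hnB h
        have hne' : n - s ≠ n - (s + 1) := by omega
        have hab := hD _ h1 _ h2 hne'
        rw [lt_abs] at hab
        omega
    · have h1 := hS n hnB hn
      have hne' : n ≠ n - s := by omega
      have hab := hD _ hnB _ h1 hne'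
      rw [lt_abs] at hab
      omega
end

section
/- Let s, k, d be positive integers with s and k coprime and s ≥ 2. If 1 < k ≤ d < s, then the maximum possible hook length of an (s,s+k)-core partition with d-distinct parts is H_d(s,k) = s + k − 1. -/
theorem max_hook_case_II (s k d : ℕ) (hs : 2 ≤ s) (hk : 0 < k) (hd : 0 < d)
    (hcop : Nat.Coprime s k) (hcase : 1 < k ∧ k ≤ d ∧ d < s) :
    IsGreatest (HookLengths s k d) (s + k - 1) := by
  obtain ⟨hk1, hkd, hds⟩ := hcase
  constructor
  · refine ⟨{k - 1, s + k - 1}, ⟨⟨k - 1, by simp⟩, ?_, ?_, ?_, ?_⟩, by simp⟩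
    · intro x hx
      simp only [Finset.mem_insert, Finset.mem_singleton] at hx
      omega
    · intro x hx hsx
      simp only [Finset.mem_insert, Finset.mem_singleton] at hx ⊢
      omega
    · intro x hx hsx
      simp only [Finset.mem_insert, Finset.mem_singleton] at hx ⊢
      omega
    · intro x hx y hy hxy
      simp only [Finset.mem_insert, Finset.mem_singleton] at hx hy
      rcases abs_cases ((x : ℤ) - (y : ℤ)) with ⟨h, _⟩ | ⟨h, _⟩ <;> omega
  · rintro n ⟨B, ⟨hne, hpos, hsub1, hsub2, hdist⟩, hn⟩
    by_contra hlt
    push_neg at hlt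
    have hnsk : s + k ≤ n := by omega
    have h1 : n - s ∈ B := hsub1 n hn (by omega)
    have h2 : n - (s + k) ∈ B := hsub2 n hn hnsk
    have hne' : n - s ≠ n - (s + k) := by omega
    have := hdist _ h1 _ h2 hne'
    rcases abs_cases ((↑(n - s) : ℤ) - (↑(n - (s + k)) : ℤ)) with ⟨h, _⟩ | ⟨h, _⟩ <;>
      · rw [h] at this
        have e1 : ((n - s : ℕ) : ℤ) = (n : ℤ) - s := by omega
        have e2 : ((n - (s + k) : ℕ) : ℤ) = (n : ℤ) - (s + k) := by omega
        rw [e1, e2] at this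
        omega
end

section
/- Let s, k, d be positive integers with s and k coprime and s ≥ 2. If d < k and s̄·s̃ mod k = 1, then the maximum possible hook length of an (s,s+k)-core partition with d-distinct parts is H_d(s,k) = B − 2. -/
/-- `s̃ = min { (ℓ ⬝ s̄⁻¹) mod k : ℓ ∈ ℤ, -d ≤ ℓ ≤ d, ℓ ≠ 0 }`, where `s̄ = s mod k`:
the residue `r ∈ [0, k)` satisfies `r = ℓ ⬝ s̄⁻¹ mod k` iff `r * s̄ ≡ ℓ (mod k)`. -/
noncomputable def stilde (s k d : ℕ) : ℕ :=
  sInf {r : ℕ | r < k ∧ ∃ ℓ : ℤ, ℓ ≠ 0 ∧ -(d : ℤ) ≤ ℓ ∧ ℓ ≤ (d : ℤ) ∧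
    (r : ℤ) * ((s : ℤ) % (k : ℤ)) ≡ ℓ [ZMOD (k : ℤ)]}
/-- `B = ⌊(s-1)/k⌋ ⬝ (k + s⬝s̃) + s ⬝ (⌈(s̄⬝s̃ - 1)/k⌉ + s̃ - 1) + s̄`,
where `s̄ = s % k` and the ceiling is computed as `(s̄⬝s̃ - 1 + (k-1))/k`. -/
noncomputable def Bof (s k d : ℕ) : ℕ :=
  (s - 1) / k * (k + s * stilde s k d)
    + s * ((s % k * stilde s k d - 1 + (k - 1)) / k + stilde s k d - 1)
    + s % k

lemma subS_mem {S K D : ℕ} {B : Finset ℕ} (h : IsCoreBeta S K D B) :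
    ∀ a x, x ∈ B → a * S ≤ x → x - a * S ∈ B := by
  intro a
  induction a with
  | zero => simp
  | succ n ih =>
    intro x hx hle
    rw [Nat.succ_mul] at hle ⊢
    have h1 : x - n * S ∈ B := ih x hx (by omega)
    have h2 : S ≤ x - n * S := by omega
    have := h.2.2.1 _ h1 h2
    have he : x - n * S - S = x - (n * S + S) := by omega
    rwa [he] at this
lemma subK_mem {S K D : ℕ} {B : Finset ℕ} (h : IsCoreBeta S K D B) :
    ∀ b x, x ∈ B → b * (S + K) ≤ x → x - b * (S + K) ∈ B := by
  intro b
  induction b with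
  | zero => simp
  | succ n ih =>
    intro x hx hle
    rw [Nat.succ_mul] at hle ⊢
    have h1 : x - n * (S+K) ∈ B := ih x hx (by omega)
    have h2 : S + K ≤ x - n * (S+K) := by omega
    have := h.2.2.2.1 _ h1 h2
    have he : x - n * (S+K) - (S+K) = x - (n * (S+K) + (S+K)) := by omega
    rwa [he] at this
lemma subSK_mem {S K D : ℕ} {B : Finset ℕ} (h : IsCoreBeta S K D B) (a b x : ℕ)
    (hx : x ∈ B) (hle : a * S + b * (S + K) ≤ x) : x - (a * S + b * (S + K)) ∈ B := by
  have h1 : x - b * (S+K) ∈ B := subK_mem h b x hx (by omega)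
  have h2 := subS_mem h a _ h1 (by omega)
  have he : x - b*(S+K) - a*S = x - (a*S + b*(S+K)) := by omega
  rwa [he] at h2

lemma upper_bound {s k d M t : ℕ} (hd : 0 < d) (hM : s * t = k * M + 1)
    {B : Finset ℕ} (h : IsCoreBeta s k d B) {n : ℕ} (hn : n ∈ B) :
    n < M * (s + k) := by
  by_contra hcon
  push_neg at hcon
  set P := M * (s + k) with hP
  set Q := (M + t) * s with hQdef
  have hQ : Q = P + 1 := by
    have : (M+t)*s = M*s + s*t := by ring
    rw [hQdef, this, hM, hP]; ring
  have hx : n - (0 * s + M * (s+k)) ∈ B := subSK_mem h 0 M n hn (by omega)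
  simp only [Nat.zero_mul, Nat.zero_add] at hx
  have hxpos : 0 < n - P := h.2.1 _ hx
  have hy : n - ((M+t) * s + 0 * (s+k)) ∈ B := subSK_mem h (M+t) 0 n hn (by omega)
  simp only [Nat.zero_mul, Nat.add_zero] at hy
  have hne : n - P ≠ n - Q := by omega
  have hdist := h.2.2.2.2 _ hx _ hy hne
  have e : ((n - P : ℕ) : ℤ) - ((n - Q : ℕ) : ℤ) = 1 := by omega
  rw [e] at hdist
  norm_num at hdist
  omega

lemma key_congr (s k : ℕ) (r : ℕ) (ℓ : ℤ) :
    ((r : ℤ) * ((s:ℤ) % (k:ℤ)) ≡ ℓ [ZMOD (k:ℤ)]) ↔ (k:ℤ) ∣ ((r:ℤ) * s - ℓ) := by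
  have h2 : (r:ℤ) * ((s:ℤ) % k) - ℓ = ((r:ℤ)*s - ℓ) - (k * (r * ((s:ℤ)/k))) := by
    rw [Int.emod_def]; ring
  have h3 : (k:ℤ) ∣ (k * (r * ((s:ℤ)/k))) := Dvd.intro _ rfl
  constructor
  · intro h
    have h4 := (Int.modEq_iff_dvd.mp h.symm)
    rw [h2] at h4
    simpa using dvd_add h4 h3
  · intro h
    refine (Int.modEq_iff_dvd.mpr ?_).symm
    rw [h2]
    exact dvd_sub h h3

lemma stilde_spec (s k d : ℕ) (hs : 2 ≤ s) (hd : 0 < d) (hcop : Nat.Coprime s k)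
    (hdk : d < k) :
    stilde s k d < k ∧
    (∀ r < stilde s k d, ∀ ℓ : ℤ, ℓ ≠ 0 → -(d:ℤ) ≤ ℓ → ℓ ≤ (d:ℤ) →
      ¬ ((k:ℤ) ∣ ((r:ℤ) * s - ℓ))) := by
  have hk2 : 2 ≤ k := by omega
  haveI : NeZero k := ⟨by omega⟩
  have hne : {r : ℕ | r < k ∧ ∃ ℓ : ℤ, ℓ ≠ 0 ∧ -(d : ℤ) ≤ ℓ ∧ ℓ ≤ (d : ℤ) ∧
      (r : ℤ) * ((s : ℤ) % (k : ℤ)) ≡ ℓ [ZMOD (k : ℤ)]}.Nonempty := by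
    set u := ZMod.unitOfCoprime s hcop with hu
    refine ⟨(((u⁻¹ : (ZMod k)ˣ) : ZMod k)).val, ZMod.val_lt _, 1, one_ne_zero, by omega,
      by exact_mod_cast hd, (key_congr s k _ 1).mpr ?_⟩
    rw [← ZMod.intCast_zmod_eq_zero_iff_dvd]
    push_cast
    rw [ZMod.natCast_val, ZMod.cast_id]
    have h5 : ((s:ZMod k)) = (u : ZMod k) := (ZMod.coe_unitOfCoprime s hcop).symm
    rw [h5, u.inv_mul]
    simp
  have hmem := Nat.sInf_mem hne
  have hlt : stilde s k d < k := hmem.1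
  refine ⟨hlt, ?_⟩
  intro r hr ℓ h0 hl1 hl2 hdvd
  have hmem2 : r ∈ {r : ℕ | r < k ∧ ∃ ℓ : ℤ, ℓ ≠ 0 ∧ -(d : ℤ) ≤ ℓ ∧ ℓ ≤ (d : ℤ) ∧
      (r : ℤ) * ((s : ℤ) % (k : ℤ)) ≡ ℓ [ZMOD (k : ℤ)]} :=
    ⟨hr.trans hlt, ℓ, h0, hl1, hl2, (key_congr s k r ℓ).mpr hdvd⟩
  exact absurd hmem2 (Nat.notMem_of_lt_sInf hr)

lemma Bof_eq (s k d : ℕ) (hs : 2 ≤ s) (hd : 0 < d) (hcop : Nat.Coprime s k)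
    (hdk : d < k) (hcase : (s % k * stilde s k d) % k = 1) :
    s * stilde s k d = k * (s * stilde s k d / k) + 1 ∧
    Bof s k d = (s * stilde s k d / k) * (s + k) + 1 := by
  have hk2 : 2 ≤ k := by omega
  set t := stilde s k d with htdef
  have ht1 : 1 ≤ t := by
    rcases Nat.eq_zero_or_pos t with h | h
    · rw [h] at hcase; simp at hcase
    · exact h
  set q := s / k with hq
  set r := s % k with hr
  have hsqr : k * q + r = s := Nat.div_add_mod s k
  have hrk : r < k := Nat.mod_lt _ (by omega)
  have hr1 : 1 ≤ r := by
    rcases Nat.eq_zero_or_pos r with h | h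
    · exfalso
      have hdvd : k ∣ s := Nat.dvd_of_mod_eq_zero h
      have := Nat.Coprime.eq_one_of_dvd hcop.symm hdvd
      omega
    · exact h
  have hrt : (r * t) % k = 1 := hcase
  set e := r * t / k with he
  have hrte : r * t = k * e + 1 := by
    have h0 := Nat.div_add_mod (r*t) k
    rw [hrt] at h0
    rw [he]
    exact h0.symm
  have hstmod : s * t % k = 1 := by
    have h1 : s * t = k * (q * t) + r * t := by rw [← hsqr]; ring
    rw [h1, Nat.mul_add_mod]
    exact hrt
  set M := s * t / k with hM
  have hstM : s * t = k * M + 1 := by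
    have h0 := Nat.div_add_mod (s*t) k
    rw [hstmod] at h0
    rw [hM]
    exact h0.symm
  clear_value t q r e M
  refine ⟨hstM, ?_⟩
  have hq1 : (s - 1) / k = q := by
    have h1 : s - 1 = k * q + (r - 1) := by omega
    rw [h1, Nat.mul_add_div (by omega), Nat.div_eq_of_lt (by omega)]
    omega
  have hceil : (r * t - 1 + (k - 1)) / k = e := by
    have h1 : r * t - 1 + (k-1) = k * e + (k-1) := by omega
    rw [h1, Nat.mul_add_div (by omega), Nat.div_eq_of_lt (by omega)]
    omega
  rw [Bof, ← htdef, ← hr, hq1, hceil]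
  have hMqe : M = q * t + e := by
    have h2 : s * t = k * (q * t + e) + 1 := by
      calc s * t = (k * q + r) * t := by rw [hsqr]
      _ = k * (q * t) + r * t := by ring
      _ = k * (q * t) + (k * e + 1) := by rw [hrte]
      _ = k * (q * t + e) + 1 := by ring
    have h3 : k * (q * t + e) = k * M := by omega
    exact (Nat.eq_of_mul_eq_mul_left (by omega) h3).symm
  obtain ⟨t', ht'⟩ : ∃ t', t = t' + 1 := ⟨t - 1, by omega⟩
  subst ht'
  have hsimp : e + (t' + 1) - 1 = e + t' := by omega
  rw [hsimp, hMqe]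
  zify at hsqr hrte ⊢
  linear_combination hrte - (t' : ℤ) * hsqr

lemma keyA (s k d t M : ℕ) (hs : 2 ≤ s) (hk2 : 2 ≤ k) (hd : 0 < d) (hdk : d < k)
    (ht1 : 1 ≤ t) (hM : s * t = k * M + 1)
    (hmin : ∀ r < t, ∀ ℓ : ℤ, ℓ ≠ 0 → -(d:ℤ) ≤ ℓ → ℓ ≤ (d:ℤ) → ¬((k:ℤ) ∣ ((r:ℤ) * s - ℓ)))
    (a b : ℕ) (hle : a * s + b * (s + k) ≤ M * (s + k) - 1) :
    a * s + b * (s + k) < M * (s + k) - 1 := by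
  have hM1 : 1 ≤ M := by
    rcases Nat.eq_zero_or_pos M with h | h
    · exfalso; rw [h] at hM; have := Nat.mul_le_mul hs ht1; omega
    · exact h
  have hP4 : s + k ≤ M * (s+k) := Nat.le_mul_of_pos_left _ hM1
  rcases Nat.lt_or_ge (a * s + b * (s + k)) (M * (s + k) - 1) with h | h
  · exact h
  exfalso
  have hEn : a * s + b * (s + k) + 1 = M * (s+k) := by omega
  have hM' : (s:ℤ) * t = k * M + 1 := by exact_mod_cast hM
  have E : (a:ℤ) * s + b * (s+k) + 1 = M * (s+k) := by exact_mod_cast hEn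
  set u : ℤ := (M:ℤ) + t - ((a:ℤ) + b) with hu
  have h1 : (s:ℤ) * u = b * k + 2 := by rw [hu]; linear_combination hM' - E
  have hu1 : 1 ≤ u := by
    by_contra hcon
    push_neg at hcon
    nlinarith [h1, (show (0:ℤ) ≤ (b:ℤ) * k by positivity), (show (0:ℤ) ≤ (s:ℤ) by positivity)]
  have hut : u ≤ t := by
    by_contra hcon
    push_neg at hcon
    have e1 : (k:ℤ) * b ≤ k * ((a:ℤ) + b) := by nlinarith [(show (0:ℤ) ≤ (k:ℤ)*a by positivity)]
    have e3 : (k:ℤ) * ((a:ℤ) + b) = k * M + k * t - k * u := by rw [hu]; ring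
    nlinarith [h1, e1, e3, hM',
      mul_le_mul_of_nonneg_right (show (1:ℤ) ≤ u - t by omega)
        (show (0:ℤ) ≤ (s:ℤ) + k by positivity)]
  rcases eq_or_lt_of_le hut with heq | hlt
  · -- u = t
    have heq2 : (k:ℤ) * ((M:ℤ) - b) = 1 := by
      rw [heq] at h1
      linear_combination h1 - hM'
    have : (k:ℤ) ≤ 1 := Int.le_of_dvd one_pos ⟨(M:ℤ) - b, heq2.symm⟩
    have : (2:ℤ) ≤ k := by exact_mod_cast hk2
    omega
  · -- u < t
    have hMc : (M:ℤ) < (a:ℤ) + b := by rw [hu] at hlt; omega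
    have hMn : M < a + b := by exact_mod_cast hMc
    set r0 : ℕ := a + b - M with hr0
    have hcast : (r0:ℤ) = (a:ℤ) + b - M := by
      rw [hr0]; push_cast [Nat.le_of_lt hMn]; ring
    have hr0t : r0 < t := by
      have : (r0:ℤ) < t := by rw [hcast, hu] at *; omega
      exact_mod_cast this
    rw [hu] at h1
    refine hmin r0 hr0t (-1) (by norm_num) (by omega) (by omega) ⟨(M:ℤ) - b, ?_⟩
    rw [hcast]
    linear_combination hM' - h1

lemma keyB (s k d t M : ℕ) (hs : 2 ≤ s) (hk2 : 2 ≤ k) (hd : 0 < d) (hdk : d < k)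
    (ht1 : 1 ≤ t) (hM : s * t = k * M + 1)
    (hmin : ∀ r < t, ∀ ℓ : ℤ, ℓ ≠ 0 → -(d:ℤ) ≤ ℓ → ℓ ≤ (d:ℤ) → ¬((k:ℤ) ∣ ((r:ℤ) * s - ℓ)))
    (a b a' b' : ℕ) (h1 : a * s + b * (s + k) ≤ M * (s + k) - 1)
    (h2 : a' * s + b' * (s + k) ≤ M * (s + k) - 1)
    (hl1 : (1:ℤ) ≤ ((a':ℤ) * s + (b':ℤ) * (s + k)) - ((a:ℤ) * s + (b:ℤ) * (s + k)))
    (hl2 : ((a':ℤ) * s + (b':ℤ) * (s + k)) - ((a:ℤ) * s + (b:ℤ) * (s + k)) ≤ (d:ℤ)) :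
    False := by
  have hM1 : 1 ≤ M := by
    rcases Nat.eq_zero_or_pos M with h | h
    · exfalso; rw [h] at hM; have := Nat.mul_le_mul hs ht1; omega
    · exact h
  have hP4 : s + k ≤ M * (s+k) := Nat.le_mul_of_pos_left _ hM1
  have hM' : (s:ℤ) * t = k * M + 1 := by exact_mod_cast hM
  have h1' : ((a:ℤ) * s + (b:ℤ) * (s+k)) + 1 ≤ (M:ℤ) * (s+k) := by
    exact_mod_cast (show a * s + b * (s + k) + 1 ≤ M * (s+k) by omega)
  have h2' : ((a':ℤ) * s + (b':ℤ) * (s+k)) + 1 ≤ (M:ℤ) * (s+k) := by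
    exact_mod_cast (show a' * s + b' * (s + k) + 1 ≤ M * (s+k) by omega)
  obtain ⟨ℓ, hldef⟩ : ∃ ℓ : ℤ, ℓ = ((a':ℤ) * s + (b':ℤ) * (s + k)) - ((a:ℤ) * s + (b:ℤ) * (s + k)) :=
    ⟨_, rfl⟩
  obtain ⟨δ, hddef⟩ : ∃ δ : ℤ, δ = ((a':ℤ) + b') - ((a:ℤ) + b) := ⟨_, rfl⟩
  obtain ⟨β, hbdef⟩ : ∃ β : ℤ, β = (b':ℤ) - b := ⟨_, rfl⟩
  rw [← hldef] at hl1 hl2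
  have hlk : ℓ = δ * s + β * k := by rw [hldef, hddef, hbdef]; ring
  have hdi : (d:ℤ) < k := by exact_mod_cast hdk
  have hks : (0:ℤ) ≤ k := by positivity
  have hss : (0:ℤ) ≤ s := by positivity
  have hb0 : (0:ℤ) ≤ b := by positivity
  have hb0' : (0:ℤ) ≤ b' := by positivity
  have ha0 : (0:ℤ) ≤ (a:ℤ) * s := by positivity
  have ha0' : (0:ℤ) ≤ (a':ℤ) * s := by positivity
  rcases lt_trichotomy δ 0 with hδ | hδ | hδ
  · -- δ < 0
    have hts : (t:ℤ) ≤ -δ := by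
      by_contra hcon
      push_neg at hcon
      obtain ⟨n, hnc⟩ : ∃ n : ℕ, (n:ℤ) = -δ := ⟨(-δ).toNat, Int.toNat_of_nonneg (by omega)⟩
      have hnt : n < t := by exact_mod_cast (show (n:ℤ) < t by omega)
      exact hmin n hnt (-ℓ) (by omega) (by omega) (by omega)
        ⟨β, by rw [hnc]; linear_combination hlk⟩
    have e1 : (t:ℤ) * s ≤ (-δ) * s := mul_le_mul_of_nonneg_right hts hss
    have e3 : (k:ℤ) * M + 2 ≤ β * k := by linarith [hlk, hl1, hM', e1]
    have hβM : (M:ℤ) + 1 ≤ β := by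
      by_contra hcon
      push_neg at hcon
      have : β * k ≤ (M:ℤ) * k := mul_le_mul_of_nonneg_right (by omega) hks
      linarith
    have hbM : (M:ℤ) ≤ b' := by
      rw [hbdef] at hβM; omega
    have : (M:ℤ) * (s+k) ≤ (b':ℤ) * (s+k) := mul_le_mul_of_nonneg_right hbM (by positivity)
    linarith
  · -- δ = 0
    rw [hδ] at hlk
    simp at hlk
    rcases le_or_gt 1 β with h | h
    · have : (1:ℤ) * k ≤ β * k := mul_le_mul_of_nonneg_right h hks
      linarith
    · have : (0:ℤ) ≤ (-β) * k := mul_nonneg (by omega) hks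
      linarith
  · -- δ > 0
    have hts : (t:ℤ) ≤ δ := by
      by_contra hcon
      push_neg at hcon
      obtain ⟨n, hnc⟩ : ∃ n : ℕ, (n:ℤ) = δ := ⟨δ.toNat, Int.toNat_of_nonneg (by omega)⟩
      have hnt : n < t := by exact_mod_cast (show (n:ℤ) < t by omega)
      exact hmin n hnt ℓ (by omega) (by omega) (by omega)
        ⟨-β, by rw [hnc]; linear_combination -hlk⟩
    have e1 : (t:ℤ) * s ≤ δ * s := mul_le_mul_of_nonneg_right hts hss
    have e2 : β * k ≤ (d:ℤ) - ((k:ℤ) * M + 1) := by linarith [hlk, hl2, hM', e1]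
    have hβM : β + (M:ℤ) ≤ 0 := by
      by_contra hcon
      push_neg at hcon
      have : (k:ℤ) * 1 ≤ k * (β + M) := mul_le_mul_of_nonneg_left (by omega) hks
      nlinarith
    have hbM : (M:ℤ) ≤ b := by
      rw [hbdef] at hβM; omega
    have : (M:ℤ) * (s+k) ≤ (b:ℤ) * (s+k) := mul_le_mul_of_nonneg_right hbM (by positivity)
    linarith

lemma witness (s k d t M : ℕ) (hs : 2 ≤ s) (hk2 : 2 ≤ k) (hd : 0 < d) (hdk : d < k)
    (ht1 : 1 ≤ t) (hM : s * t = k * M + 1)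
    (hmin : ∀ r < t, ∀ ℓ : ℤ, ℓ ≠ 0 → -(d:ℤ) ≤ ℓ → ℓ ≤ (d:ℤ) → ¬((k:ℤ) ∣ ((r:ℤ) * s - ℓ))) :
    ∃ C : Finset ℕ, IsCoreBeta s k d C ∧ (M * (s + k) - 1) ∈ C := by
  set m := M * (s + k) - 1 with hmdef
  set C : Finset ℕ :=
    (((Finset.range (m+1)) ×ˢ (Finset.range (m+1))).filter
      (fun p => p.1 * s + p.2 * (s+k) ≤ m)).image (fun p => m - (p.1 * s + p.2 * (s+k)))
    with hC
  have hmem : ∀ x, x ∈ C ↔ ∃ a b, a * s + b * (s+k) ≤ m ∧ m - (a * s + b * (s+k)) = x := by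
    intro x
    rw [hC, Finset.mem_image]
    constructor
    · rintro ⟨⟨a, b⟩, hab, hx⟩
      rw [Finset.mem_filter] at hab
      exact ⟨a, b, hab.2, hx⟩
    · rintro ⟨a, b, hle, hx⟩
      refine ⟨⟨a, b⟩, ?_, hx⟩
      rw [Finset.mem_filter, Finset.mem_product, Finset.mem_range, Finset.mem_range]
      have ha : a ≤ a * s := Nat.le_mul_of_pos_right a (by omega)
      have hb : b ≤ b * (s+k) := Nat.le_mul_of_pos_right b (by omega)
      exact ⟨⟨by omega, by omega⟩, hle⟩
  have hmC : m ∈ C := by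
    rw [hmem]
    exact ⟨0, 0, by simp, by simp⟩
  refine ⟨C, ⟨⟨m, hmC⟩, ?_, ?_, ?_, ?_⟩, hmC⟩
  · -- positivity
    intro x hx
    rw [hmem] at hx
    obtain ⟨a, b, hle, hx⟩ := hx
    have := keyA s k d t M hs hk2 hd hdk ht1 hM hmin a b hle
    omega
  · -- closure under subtracting s
    intro x hx hsx
    rw [hmem] at hx ⊢
    obtain ⟨a, b, hle, hx⟩ := hx
    refine ⟨a + 1, b, ?_, ?_⟩
    · have e : (a+1) * s + b * (s+k) = (a * s + b * (s+k)) + s := by ring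
      omega
    · have e : (a+1) * s + b * (s+k) = (a * s + b * (s+k)) + s := by ring
      omega
  · -- closure under subtracting s+k
    intro x hx hsx
    rw [hmem] at hx ⊢
    obtain ⟨a, b, hle, hx⟩ := hx
    refine ⟨a, b + 1, ?_, ?_⟩
    · have e : a * s + (b+1) * (s+k) = (a * s + b * (s+k)) + (s+k) := by ring
      omega
    · have e : a * s + (b+1) * (s+k) = (a * s + b * (s+k)) + (s+k) := by ring
      omega
  · -- distinctness
    intro x hx y hy hne
    by_contra hcon
    push_neg at hcon
    obtain ⟨hc1, hc2⟩ := abs_le.mp hcon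
    rw [hmem] at hx hy
    obtain ⟨a, b, hle1, hx⟩ := hx
    obtain ⟨a', b', hle2, hy⟩ := hy
    have c1 : ((a * s + b * (s+k) : ℕ) : ℤ) = (a:ℤ) * s + (b:ℤ) * (s+k) := by push_cast; ring
    have c2 : ((a' * s + b' * (s+k) : ℕ) : ℤ) = (a':ℤ) * s + (b':ℤ) * (s+k) := by push_cast; ring
    have e : (x:ℤ) - (y:ℤ)
        = ((a':ℤ) * s + (b':ℤ) * (s+k)) - ((a:ℤ) * s + (b:ℤ) * (s+k)) := by omega
    have hxyne : x ≠ y := hne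
    rcases Nat.lt_or_ge x y with hlt | hge
    · exact keyB s k d t M hs hk2 hd hdk ht1 hM hmin a' b' a b hle2 hle1
        (by omega) (by omega)
    · have hlt : y < x := by omega
      exact keyB s k d t M hs hk2 hd hdk ht1 hM hmin a b a' b' hle1 hle2
        (by omega) (by omega)

theorem max_hook_case_III (s k d : ℕ) (hs : 2 ≤ s) (hk : 0 < k) (hd : 0 < d)
    (hcop : Nat.Coprime s k) (hdk : d < k)
    (hcase : (s % k * stilde s k d) % k = 1) :
    IsGreatest {x : ℤ | ∃ n ∈ HookLengths s k d, (n : ℤ) = x}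
      ((Bof s k d : ℤ) - 2) := by
  have hk2 : 2 ≤ k := by omega
  obtain ⟨htk, hmin⟩ := stilde_spec s k d hs hd hcop hdk
  obtain ⟨hM, hBof⟩ := Bof_eq s k d hs hd hcop hdk hcase
  set t := stilde s k d with htdef
  set M := s * t / k with hMdef
  have ht1 : 1 ≤ t := by
    rcases Nat.eq_zero_or_pos t with h | h
    · rw [h] at hcase; simp at hcase
    · exact h
  have hM1 : 1 ≤ M := by
    rcases Nat.eq_zero_or_pos M with h | h
    · exfalso; rw [h] at hM; have := Nat.mul_le_mul hs ht1; omega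
    · exact h
  have hP4 : s + k ≤ M * (s + k) := Nat.le_mul_of_pos_left _ hM1
  obtain ⟨C, hcore, hmC⟩ := witness s k d t M hs hk2 hd hdk ht1 hM hmin
  constructor
  · exact ⟨M * (s + k) - 1, ⟨C, hcore, hmC⟩, by rw [hBof]; omega⟩
  · rintro x ⟨n, ⟨B, hB, hnB⟩, rfl⟩
    have := upper_bound hd hM hB hnB
    rw [hBof]
    omega
end

section
/- Let s, k, d be positive integers with s and k coprime and s ≥ 2. If d < k and s̄·s̃ mod k = k − 1 with d < k − 1, then the maximum possible hook length of an (s,s+k)-core partition with d-distinct parts is H_d(s,k) = B − 1. -/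
lemma stilde_le (s k d : ℕ) {r : ℕ} (hr : r < k)
    (h : ∃ ℓ : ℤ, ℓ ≠ 0 ∧ -(d : ℤ) ≤ ℓ ∧ ℓ ≤ (d : ℤ) ∧
      (r : ℤ) * ((s : ℤ) % (k : ℤ)) ≡ ℓ [ZMOD (k : ℤ)]) :
    stilde s k d ≤ r := Nat.sInf_le ⟨hr, h⟩

set_option linter.unusedSectionVars false

section facts
variable (s k d : ℕ) (hs : 2 ≤ s) (hk : 0 < k) (hd : 0 < d)
    (hcop : Nat.Coprime s k) (hdk : d < k)
    (hcase : (s % k * stilde s k d) % k = k - 1) (hdk1 : d < k - 1)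

include hd hdk1 in
lemma k3 : 3 ≤ k := by omega

include hcop hd hdk1 in
lemma sb1 : 1 ≤ s % k := by
  rcases Nat.eq_zero_or_pos (s % k) with h | h
  · exfalso
    have h1 : k ∣ s := Nat.dvd_of_mod_eq_zero h
    have h2 : k ∣ 1 := hcop ▸ Nat.dvd_gcd h1 dvd_rfl
    have h3 : k = 1 := Nat.dvd_one.mp h2
    omega
  · exact h

include hd hdk1 hcase in
lemma t1 : 1 ≤ stilde s k d := by
  by_contra h
  have h0 : stilde s k d = 0 := by omega
  rw [h0] at hcase
  simp at hcase
  omega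

include hk hcop hd hdk1 in
lemma q_eq : (s - 1) / k = s / k := by
  have h1 := sb1 s k d hd hcop hdk1
  have hmlt : s % k < k := Nat.mod_lt _ hk
  have h2 := Nat.div_add_mod s k
  have h3 : s - 1 = k * (s / k) + (s % k - 1) := by omega
  have h4 : (s % k - 1) / k = 0 := Nat.div_eq_of_lt (by omega)
  rw [h3, Nat.mul_add_div hk, h4]
  omega

include hd hdk1 hcase in
lemma Ek : (s % k * stilde s k d / k + 1) * k = s % k * stilde s k d + 1 := by
  have h := Nat.div_add_mod (s % k * stilde s k d) k
  rw [hcase] at h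
  have hmc : (s % k * stilde s k d / k + 1) * k = k * (s % k * stilde s k d / k) + k := by ring
  omega

include hk hd hdk1 hcase in
lemma ceil_eq : (s % k * stilde s k d - 1 + (k - 1)) / k = s % k * stilde s k d / k + 1 := by
  have h := Nat.div_add_mod (s % k * stilde s k d) k
  rw [hcase] at h
  set M := s % k * stilde s k d / k with hM
  have h2 : s % k * stilde s k d - 1 + (k - 1) = (k - 3) + k * (M + 1) := by
    have h5 : k * (M + 1) = k * M + k := by ring
    omega
  have h4 : (k - 3) / k = 0 := Nat.div_eq_of_lt (by omega)
  rw [h2, Nat.add_mul_div_left _ _ hk, h4]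
  omega

include hs hk hcop hd hdk1 hcase in
lemma key_facts : ∃ q E : ℕ, 1 ≤ E ∧ q * k + s % k = s ∧
    E * k = s % k * stilde s k d + 1 ∧
    Bof s k d = (q * stilde s k d + stilde s k d + E) * s ∧
    Bof s k d + 1 = (q * stilde s k d + E) * (s + k) := by
  refine ⟨s / k, s % k * stilde s k d / k + 1, le_add_self, Nat.div_add_mod' s k,
    Ek s k d hd hcase hdk1, ?_, ?_⟩
  all_goals {
    have ht := t1 s k d hd hcase hdk1
    have hEk := Ek s k d hd hcase hdk1
    have h1 : s / k * k + s % k = s := Nat.div_add_mod' s k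
    unfold Bof
    rw [q_eq s k d hk hd hcop hdk1, ceil_eq s k d hk hd hcase hdk1]
    set t := stilde s k d with hT; clear_value t
    set E := s % k * t / k + 1 with hE; clear_value E
    set q := s / k with hQ; clear_value q
    set sb := s % k with hSB; clear_value sb
    set u := E + t - 1 with hU
    have hu : u + 1 = E + t := by omega
    clear_value u
    clear hcase hU hE hQ hSB hT hcop
    zify
    zify at h1 hEk hu
    first
      | linear_combination h1 + (s : ℤ) * hu
      | linear_combination h1 + (s : ℤ) * hu - (t : ℤ) * h1 - hEk
  }
end facts

-- sub-closure lemmas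
lemma subS {S K D : ℕ} {B : Finset ℕ} (h : IsCoreBeta S K D B) :
    ∀ (a x : ℕ), x ∈ B → a * S ≤ x → x - a * S ∈ B := by
  intro a
  induction a with
  | zero => intro x hx _; simpa using hx
  | succ n ih =>
    intro x hx hle
    have hsm : (n + 1) * S = n * S + S := by ring
    have hS : S ≤ x := by omega
    have h1 : x - S ∈ B := h.2.2.1 x hx hS
    have h2 : n * S ≤ x - S := by omega
    have h3 := ih (x - S) h1 h2
    have heq : x - (n + 1) * S = x - S - n * S := by omega
    rwa [heq]

lemma subSK {S K D : ℕ} {B : Finset ℕ} (h : IsCoreBeta S K D B) :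
    ∀ (a x : ℕ), x ∈ B → a * (S + K) ≤ x → x - a * (S + K) ∈ B := by
  intro a
  induction a with
  | zero => intro x hx _; simpa using hx
  | succ n ih =>
    intro x hx hle
    have hsm : (n + 1) * (S + K) = n * (S + K) + (S + K) := by ring
    have hS : S + K ≤ x := by omega
    have h1 : x - (S + K) ∈ B := h.2.2.2.1 x hx hS
    have h2 : n * (S + K) ≤ x - (S + K) := by omega
    have h3 := ih (x - (S + K)) h1 h2
    have heq : x - (n + 1) * (S + K) = x - (S + K) - n * (S + K) := by omega
    rwa [heq]

lemma sub_mem' {s k : ℕ} {D : ℕ} {B : Finset ℕ} (h : IsCoreBeta s k D B)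
    {c b x : ℕ} (hbc : b ≤ c) (hx : x ∈ B) (hle : c * s + b * k ≤ x) :
    x - (c * s + b * k) ∈ B := by
  rcases Nat.exists_eq_add_of_le hbc with ⟨e, rfl⟩
  have hkey : (b + e) * s + b * k = b * (s + k) + e * s := by ring
  have h1 : b * (s + k) ≤ x := by omega
  have h2 : x - b * (s + k) ∈ B := subSK h b x hx h1
  have h3 : e * s ≤ x - b * (s + k) := by omega
  have h4 := subS h e _ h2 h3
  have heq : x - ((b + e) * s + b * k) = x - b * (s + k) - e * s := by omega
  rwa [heq]


lemma no_close_aux (s k d : ℕ) (hs : 2 ≤ s) (hk : 0 < k) (hd : 0 < d)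
    (hcop : Nat.Coprime s k) (hdk : d < k)
    (hcase : (s % k * stilde s k d) % k = k - 1) (hdk1 : d < k - 1)
    {c b c' b' : ℕ} (hbc : b ≤ c) (hbc' : b' ≤ c')
    (hn : c * s + b * k ≤ Bof s k d) (hn' : c' * s + b' * k ≤ Bof s k d)
    (hlt : c' * s + b' * k < c * s + b * k)
    (hcon : ((c * s + b * k : ℕ) : ℤ) - ((c' * s + b' * k : ℕ) : ℤ) ≤ (d : ℤ)) : False := by
  obtain ⟨q, E, hE1, hqk, hek, hB, hB1⟩ := key_facts s k d hs hk hd hcop hcase hdk1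
  set t := stilde s k d with hT
  have hkz : (k : ℤ) ≠ 0 := by exact_mod_cast hk.ne'
  have hk0 : (0 : ℤ) < k := by exact_mod_cast hk
  have hts : (t : ℤ) * s + 1 = ((q : ℤ) * t + E) * k := by
    have h1 : (q : ℤ) * k + ((s % k : ℕ) : ℤ) = s := by exact_mod_cast hqk
    have h2 : (E : ℤ) * k = ((s % k : ℕ) : ℤ) * t + 1 := by exact_mod_cast hek
    linear_combination -((t : ℤ) * h1) - h2
  set δ : ℤ := ((c * s + b * k : ℕ) : ℤ) - ((c' * s + b' * k : ℕ) : ℤ) with hδdef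
  have hδ1 : 1 ≤ δ := by
    have h := (Nat.cast_lt (α := ℤ)).mpr hlt
    omega
  have hδd : δ ≤ (d : ℤ) := hcon
  have hδeq : δ = ((c : ℤ) - c') * s + ((b : ℤ) - b') * k := by
    rw [hδdef]; push_cast; ring
  have hdk1' : (d : ℤ) + 2 ≤ k := by
    have h : d + 2 ≤ k := by omega
    exact_mod_cast h
  by_cases hdvd : (k : ℤ) ∣ ((c : ℤ) - c')
  · have h1 : (k : ℤ) ∣ δ := by
      rw [hδeq]
      exact dvd_add (hdvd.mul_right _) (dvd_mul_left _ _)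
    have := Int.le_of_dvd (by omega) h1
    omega
  · set r : ℤ := ((c : ℤ) - c') % k with hrdef
    have hr0 : 0 ≤ r := Int.emod_nonneg _ hkz
    have hrk : r < k := Int.emod_lt_of_pos _ hk0
    have hrne : r ≠ 0 := fun h => hdvd (Int.dvd_of_emod_eq_zero h)
    have hdvd2 : (k : ℤ) ∣ ((c : ℤ) - c') - r :=
      ⟨((c : ℤ) - c') / k, by rw [hrdef, Int.emod_def]; ring⟩
    have hdvd1 : (k : ℤ) ∣ (s : ℤ) - (s : ℤ) % k := ⟨(s : ℤ) / k, by rw [Int.emod_def]; ring⟩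
    have hdvd3 : (k : ℤ) ∣ δ - r * ((s : ℤ) % k) := by
      have hre : δ - r * ((s : ℤ) % k)
          = (((c : ℤ) - c') - r) * s + r * ((s : ℤ) - (s : ℤ) % k) + ((b : ℤ) - b') * k := by
        linear_combination hδeq
      rw [hre]
      exact dvd_add (dvd_add (hdvd2.mul_right _) (hdvd1.mul_left _)) (dvd_mul_left _ _)
    have hrnat : ((r.toNat : ℕ) : ℤ) = r := Int.toNat_of_nonneg hr0
    have htr : (t : ℤ) ≤ r := by
      have h1 : stilde s k d ≤ r.toNat := by
        apply stilde_le s k d (show r.toNat < k by omega)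
        exact ⟨δ, by omega, by omega, hδd,
          (Int.modEq_iff_dvd).mpr (by rw [hrnat]; exact hdvd3)⟩
      have h2 : ((stilde s k d : ℕ) : ℤ) ≤ ((r.toNat : ℕ) : ℤ) := by exact_mod_cast h1
      omega
    have htkr : (t : ℤ) ≤ (k : ℤ) - r := by
      have hkrnat : (((k : ℤ) - r).toNat : ℤ) = (k : ℤ) - r := Int.toNat_of_nonneg (by omega)
      have hdvd4 : (k : ℤ) ∣ (-δ) - ((k : ℤ) - r) * ((s : ℤ) % k) := by
        have hre : (-δ) - ((k : ℤ) - r) * ((s : ℤ) % k)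
            = -(δ - r * ((s : ℤ) % k)) - (k : ℤ) * ((s : ℤ) % k) := by ring
        rw [hre]
        exact dvd_sub (dvd_neg.mpr hdvd3) (dvd_mul_right _ _)
      have h1 : stilde s k d ≤ ((k : ℤ) - r).toNat := by
        apply stilde_le s k d (show ((k : ℤ) - r).toNat < k by omega)
        exact ⟨-δ, by omega, by omega, by omega,
          (Int.modEq_iff_dvd).mpr (by rw [hkrnat]; exact hdvd4)⟩
      have h2 : ((stilde s k d : ℕ) : ℤ) ≤ ((((k : ℤ) - r).toNat : ℕ) : ℤ) := by exact_mod_cast h1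
      omega
    have hcastn : ((c * s + b * k : ℕ) : ℤ) = (c : ℤ) * s + (b : ℤ) * k := by push_cast; ring
    have hcastn' : ((c' * s + b' * k : ℕ) : ℤ) = (c' : ℤ) * s + (b' : ℤ) * k := by push_cast; ring
    have hnZ : (c : ℤ) * s + (b : ℤ) * k ≤ (Bof s k d : ℤ) := by
      rw [← hcastn]; exact_mod_cast hn
    have hnZ' : (c' : ℤ) * s + (b' : ℤ) * k ≤ (Bof s k d : ℤ) := by
      rw [← hcastn']; exact_mod_cast hn'
    have hB1' : ((Bof s k d : ℕ) : ℤ) + 1 = ((q : ℤ) * t + E) * ((s : ℤ) + k) := by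
      exact_mod_cast hB1
    rcases lt_trichotomy c' c with hcc | hcc | hcc
    · -- c' < c
      obtain ⟨m, hm⟩ := hdvd2
      have hD1 : (1 : ℤ) ≤ (c : ℤ) - c' := by
        have := (Nat.cast_lt (α := ℤ)).mpr hcc
        omega
      have hm0 : 0 ≤ m := by
        by_contra hcon2
        push_neg at hcon2
        have h1 : m ≤ -1 := by omega
        have h2 : (k : ℤ) * m ≤ (k : ℤ) * (-1) := by
          exact mul_le_mul_of_nonneg_left h1 (le_of_lt hk0)
        linarith
      have hkm : 0 ≤ (k : ℤ) * m := mul_nonneg (le_of_lt hk0) hm0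
      have hDr : r ≤ (c : ℤ) - c' := by linarith
      have hDt : (t : ℤ) ≤ (c : ℤ) - c' := le_trans htr hDr
      have h6 : ((b' : ℤ) - b) * k = ((c : ℤ) - c') * s - δ := by linear_combination hδeq
      have h7 : (t : ℤ) * s ≤ ((c : ℤ) - c') * s :=
        mul_le_mul_of_nonneg_right hDt (by exact_mod_cast Nat.zero_le _)
      have h8 : (((q : ℤ) * t + E) - 1) * k < ((b' : ℤ) - b) * k := by linarith [h6, h7, hts, hδd, hdk1']
      have h9 : ((q : ℤ) * t + E) - 1 < (b' : ℤ) - b := lt_of_mul_lt_mul_right h8 (le_of_lt hk0)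
      have h9' := Int.add_one_le_iff.mpr h9
      have hb0 : (0 : ℤ) ≤ (b : ℤ) := Nat.cast_nonneg b
      have h10 : ((q : ℤ) * t + E) ≤ (b' : ℤ) := by linarith
      have h11 : ((q : ℤ) * t + E) * ((s : ℤ) + k) ≤ (b' : ℤ) * ((s : ℤ) + k) :=
        mul_le_mul_of_nonneg_right h10 (by exact_mod_cast Nat.zero_le _)
      have h12 : (b' : ℤ) * s ≤ (c' : ℤ) * s :=
        mul_le_mul_of_nonneg_right (by exact_mod_cast hbc') (by exact_mod_cast Nat.zero_le _)
      linarith [h11, h12, hB1', hnZ']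
    · exact hdvd (by rw [hcc]; simp)
    · -- c < c'
      have hdvd2' : (k : ℤ) ∣ ((c' : ℤ) - c) - ((k : ℤ) - r) := by
        have hre : ((c' : ℤ) - c) - ((k : ℤ) - r) = -(((c : ℤ) - c') - r) - k := by ring
        rw [hre]
        exact dvd_sub (dvd_neg.mpr hdvd2) dvd_rfl
      obtain ⟨m, hm⟩ := hdvd2'
      have hD1 : (1 : ℤ) ≤ (c' : ℤ) - c := by
        have := (Nat.cast_lt (α := ℤ)).mpr hcc
        omega
      have hm0 : 0 ≤ m := by
        by_contra hcon2
        push_neg at hcon2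
        have h1 : m ≤ -1 := by omega
        have h2 : (k : ℤ) * m ≤ (k : ℤ) * (-1) := by
          exact mul_le_mul_of_nonneg_left h1 (le_of_lt hk0)
        linarith
      have hkm : 0 ≤ (k : ℤ) * m := mul_nonneg (le_of_lt hk0) hm0
      have hDr : (k : ℤ) - r ≤ (c' : ℤ) - c := by linarith
      have hDt : (t : ℤ) ≤ (c' : ℤ) - c := le_trans htkr hDr
      have h6 : ((b : ℤ) - b') * k = δ + ((c' : ℤ) - c) * s := by linear_combination -hδeq
      have h7 : (t : ℤ) * s ≤ ((c' : ℤ) - c) * s :=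
        mul_le_mul_of_nonneg_right hDt (by exact_mod_cast Nat.zero_le _)
      have h8 : ((q : ℤ) * t + E) * k ≤ ((b : ℤ) - b') * k := by linarith [h6, h7, hts, hδ1]
      have h9 : ((q : ℤ) * t + E) ≤ (b : ℤ) - b' := le_of_mul_le_mul_right h8 hk0
      have hb0 : (0 : ℤ) ≤ (b' : ℤ) := Nat.cast_nonneg b'
      have h10 : ((q : ℤ) * t + E) ≤ (b : ℤ) := by linarith
      have h11 : ((q : ℤ) * t + E) * ((s : ℤ) + k) ≤ (b : ℤ) * ((s : ℤ) + k) :=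
        mul_le_mul_of_nonneg_right h10 (by exact_mod_cast Nat.zero_le _)
      have h12 : (b : ℤ) * s ≤ (c : ℤ) * s :=
        mul_le_mul_of_nonneg_right (by exact_mod_cast hbc) (by exact_mod_cast Nat.zero_le _)
      linarith [h11, h12, hB1', hnZ]


lemma no_close (s k d : ℕ) (hs : 2 ≤ s) (hk : 0 < k) (hd : 0 < d)
    (hcop : Nat.Coprime s k) (hdk : d < k)
    (hcase : (s % k * stilde s k d) % k = k - 1) (hdk1 : d < k - 1)
    {c b c' b' : ℕ} (hbc : b ≤ c) (hbc' : b' ≤ c')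
    (hn : c * s + b * k ≤ Bof s k d) (hn' : c' * s + b' * k ≤ Bof s k d)
    (hne : c * s + b * k ≠ c' * s + b' * k) :
    (d : ℤ) < |((c * s + b * k : ℕ) : ℤ) - ((c' * s + b' * k : ℕ) : ℤ)| := by
  by_contra hcon
  push_neg at hcon
  rcases lt_trichotomy (c' * s + b' * k) (c * s + b * k) with h | h | h
  · exact no_close_aux s k d hs hk hd hcop hdk hcase hdk1 hbc hbc' hn hn' h
      (le_trans (le_abs_self _) hcon)
  · exact hne h.symm
  · refine no_close_aux s k d hs hk hd hcop hdk hcase hdk1 hbc' hbc hn' hn h ?_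
    calc ((c' * s + b' * k : ℕ) : ℤ) - ((c * s + b * k : ℕ) : ℤ)
        = -(((c * s + b * k : ℕ) : ℤ) - ((c' * s + b' * k : ℕ) : ℤ)) := by ring
      _ ≤ |((c * s + b * k : ℕ) : ℤ) - ((c' * s + b' * k : ℕ) : ℤ)| := neg_le_abs _
      _ ≤ (d : ℤ) := hcon

theorem max_hook_case_VI (s k d : ℕ) (hs : 2 ≤ s) (hk : 0 < k) (hd : 0 < d)
    (hcop : Nat.Coprime s k) (hdk : d < k)
    (hcase : (s % k * stilde s k d) % k = k - 1) (hdk1 : d < k - 1) :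
    IsGreatest {x : ℤ | ∃ n ∈ HookLengths s k d, (n : ℤ) = x}
      ((Bof s k d : ℤ) - 1) := by
  classical
  obtain ⟨q, E, hE1, hqk, hek, hB, hB1⟩ := key_facts s k d hs hk hd hcop hcase hdk1
  have hd1 : (1 : ℤ) ≤ (d : ℤ) := by exact_mod_cast hd
  set t := stilde s k d with hT
  set N := Bof s k d with hN
  have e1 : (q * t + t + E) * s + 0 * k = N := by rw [hB]; ring
  have e2 : (q * t + E) * s + (q * t + E) * k = N + 1 := by
    rw [hB1]; ring
  have hNs : s ≤ N := by
    have h1 : 1 ≤ q * t + t + E := le_trans hE1 (Nat.le_add_left E _)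
    calc s = 1 * s := (one_mul s).symm
      _ ≤ (q * t + t + E) * s := Nat.mul_le_mul_right s h1
      _ = N := by rw [hB]
  have hN1 : 1 ≤ N := by omega
  constructor
  · -- membership : (Bof : ℤ) - 1 is attained
    refine ⟨N - 1, ?_, by rw [Nat.cast_sub hN1, Nat.cast_one]⟩
    set Bst : Finset ℕ := ((Finset.range N ×ˢ Finset.range N).filter
        (fun p => p.2 ≤ p.1 ∧ p.1 * s + p.2 * k ≤ N - 1)).image
        (fun p => N - 1 - (p.1 * s + p.2 * k)) with hBst
    have hmem : ∀ y, y ∈ Bst ↔ ∃ cc bb : ℕ, bb ≤ cc ∧ cc * s + bb * k ≤ N - 1 ∧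
        y = N - 1 - (cc * s + bb * k) := by
      intro y
      rw [hBst]
      simp only [Finset.mem_image, Finset.mem_filter, Finset.mem_product, Finset.mem_range]
      constructor
      · rintro ⟨⟨cc, bb⟩, ⟨⟨-, -⟩, hb, hle⟩, rfl⟩
        exact ⟨cc, bb, hb, hle, rfl⟩
      · rintro ⟨cc, bb, hb, hle, rfl⟩
        have hcc : cc ≤ cc * s := Nat.le_mul_of_pos_right cc (by omega)
        have hbb : bb ≤ bb * k := Nat.le_mul_of_pos_right bb (by omega)
        exact ⟨⟨cc, bb⟩, ⟨⟨by omega, by omega⟩, hb, hle⟩, rfl⟩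
    -- key positivity fact: no representation of N - 1
    have hpos : ∀ cc bb : ℕ, bb ≤ cc → cc * s + bb * k ≤ N - 1 → cc * s + bb * k < N - 1 := by
      intro cc bb hb hle
      rcases eq_or_lt_of_le hle with heq | hlt
      · exfalso
        have hne : cc * s + bb * k ≠ (q * t + t + E) * s + 0 * k := by omega
        have := no_close s k d hs hk hd hcop hdk hcase hdk1 hb (Nat.zero_le _)
          (by omega) (by omega) hne
        rw [heq, e1] at this
        have habs : ((N - 1 : ℕ) : ℤ) - ((N : ℕ) : ℤ) = -1 := by
          have := hN1; push_cast [Nat.cast_sub hN1]; ring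
        rw [habs] at this
        simp at this
        linarith
      · exact hlt
    refine ⟨Bst, ⟨⟨N - 1, (hmem _).mpr ⟨0, 0, le_refl 0, by omega, by omega⟩⟩, ?_, ?_, ?_, ?_⟩,
      (hmem _).mpr ⟨0, 0, le_refl 0, by omega, by omega⟩⟩
    · -- positivity
      intro x hx
      obtain ⟨cc, bb, hb, hle, rfl⟩ := (hmem x).mp hx
      have := hpos cc bb hb hle
      omega
    · -- closure under subtracting s
      intro x hx hsx
      obtain ⟨cc, bb, hb, hle, rfl⟩ := (hmem x).mp hx
      apply (hmem _).mpr
      refine ⟨cc + 1, bb, by omega, ?_, ?_⟩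
      · have h1 : (cc + 1) * s + bb * k = cc * s + bb * k + s := by ring
        omega
      · have h1 : (cc + 1) * s + bb * k = cc * s + bb * k + s := by ring
        omega
    · -- closure under subtracting s + k
      intro x hx hsx
      obtain ⟨cc, bb, hb, hle, rfl⟩ := (hmem x).mp hx
      apply (hmem _).mpr
      refine ⟨cc + 1, bb + 1, by omega, ?_, ?_⟩
      · have h1 : (cc + 1) * s + (bb + 1) * k = cc * s + bb * k + (s + k) := by ring
        omega
      · have h1 : (cc + 1) * s + (bb + 1) * k = cc * s + bb * k + (s + k) := by ring
        omega
    · -- distinctness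
      intro x hx y hy hxy
      obtain ⟨cc, bb, hb, hle, rfl⟩ := (hmem x).mp hx
      obtain ⟨cc', bb', hb', hle', rfl⟩ := (hmem y).mp hy
      have hne : cc * s + bb * k ≠ cc' * s + bb' * k := by
        intro h; apply hxy; rw [h]
      have hkey := no_close s k d hs hk hd hcop hdk hcase hdk1 hb hb'
        (by omega) (by omega) hne
      have hcx : ((N - 1 - (cc * s + bb * k) : ℕ) : ℤ)
          = ((N - 1 : ℕ) : ℤ) - ((cc * s + bb * k : ℕ) : ℤ) := by
        have := hle; push_cast [Nat.cast_sub hle]; ring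
      have hcy : ((N - 1 - (cc' * s + bb' * k) : ℕ) : ℤ)
          = ((N - 1 : ℕ) : ℤ) - ((cc' * s + bb' * k : ℕ) : ℤ) := by
        have := hle'; push_cast [Nat.cast_sub hle']; ring
      rw [hcx, hcy]
      have habs : |((N - 1 : ℕ) : ℤ) - ((cc * s + bb * k : ℕ) : ℤ)
          - (((N - 1 : ℕ) : ℤ) - ((cc' * s + bb' * k : ℕ) : ℤ))|
          = |((cc' * s + bb' * k : ℕ) : ℤ) - ((cc * s + bb * k : ℕ) : ℤ)| := by
        congr 1; ring
      rw [habs, abs_sub_comm]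
      exact hkey
  · -- upper bound
    rintro x ⟨n, ⟨B, hBcore, hnB⟩, rfl⟩
    have hlt : n < N := by
      by_contra hge
      push_neg at hge
      rcases eq_or_lt_of_le hge with heq | hlt2
      · -- n = N is a semigroup element: 0 ∈ B
        have hle : (q * t + t + E) * s + 0 * k ≤ n := by omega
        have h0 := sub_mem' hBcore (Nat.zero_le _) hnB hle
        have hz : n - ((q * t + t + E) * s + 0 * k) = 0 := by omega
        rw [hz] at h0
        exact absurd (hBcore.2.1 0 h0) (by omega)
      · -- N + 1 ≤ n: two close elements
        have hle1 : (q * t + t + E) * s + 0 * k ≤ n := by omega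
        have hle2 : (q * t + E) * s + (q * t + E) * k ≤ n := by omega
        have hy1 := sub_mem' hBcore (Nat.zero_le _) hnB hle1
        have hy2 := sub_mem' hBcore (le_refl (q * t + E)) hnB hle2
        have hne : n - ((q * t + t + E) * s + 0 * k)
            ≠ n - ((q * t + E) * s + (q * t + E) * k) := by omega
        have hdist := hBcore.2.2.2.2 _ hy1 _ hy2 hne
        have hdiff : ((n - ((q * t + t + E) * s + 0 * k) : ℕ) : ℤ)
            - ((n - ((q * t + E) * s + (q * t + E) * k) : ℕ) : ℤ) = 1 := by omega
        rw [hdiff] at hdist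
        simp at hdist
        linarith
    have : ((n : ℕ) : ℤ) ≤ (N : ℤ) - 1 := by omega
    exact this
end

section
/- Let s, k, d be positive integers with s and k coprime and s ≥ 2, and let b ≥ 2 and 0 ≤ c < b be integers. If k = 1 and d < s, then H_{bd+c}(bs, bk) = b·(H_d(s,k) + 2) − 1. -/
lemma lt_abs_sub_of (x y D : ℕ) (h : x + D < y ∨ y + D < x) :
    (D : ℤ) < |(x : ℤ) - (y : ℤ)| := by
  rcases abs_cases ((x : ℤ) - (y : ℤ)) with ⟨h1, h2⟩ | ⟨h1, h2⟩ <;> rw [h1] <;> omega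

/-- Upper bound: in any `D`-distinct `(S,S+K)`-core β-set with `K ≤ D`,
every element is at most `S + K - 1`. -/
lemma upper_bound_s6 (S K D n : ℕ) (hK : 0 < K) (hKD : K ≤ D)
    (hn : n ∈ HookLengths S K D) : n ≤ S + K - 1 := by
  obtain ⟨B, ⟨hne, hpos, h1, h2, hdist⟩, hnB⟩ := hn
  by_contra hcon
  push_neg at hcon
  have hnS : S + K ≤ n := by omega
  have hx := h1 n hnB (by omega)
  have hy := h2 n hnB hnS
  have hxy : n - S ≠ n - (S + K) := by omega
  have hD := hdist _ hx _ hy hxy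
  rcases abs_cases (((n - S : ℕ) : ℤ) - ((n - (S + K) : ℕ) : ℤ)) with ⟨e, _⟩ | ⟨e, _⟩ <;>
    rw [e] at hD <;> omega

/-- The main computation for the rescaled problem. -/
lemma main_greatest (S K D : ℕ) (hK : 2 ≤ K) (hKD : K ≤ D) (hDS : D < S) :
    IsGreatest (HookLengths S K D) (S + K - 1) := by
  constructor
  · refine ⟨{K - 1, S + K - 1}, ⟨⟨K - 1, by simp⟩, ?_, ?_, ?_, ?_⟩, by simp⟩
    · intro x hx
      simp only [Finset.mem_insert, Finset.mem_singleton] at hx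
      rcases hx with rfl | rfl <;> omega
    · intro x hx hxS
      simp only [Finset.mem_insert, Finset.mem_singleton] at hx ⊢
      rcases hx with rfl | rfl <;> omega
    · intro x hx hxSK
      simp only [Finset.mem_insert, Finset.mem_singleton] at hx
      rcases hx with rfl | rfl <;> omega
    · intro x hx y hy hxy
      simp only [Finset.mem_insert, Finset.mem_singleton] at hx hy
      rcases hx with rfl | rfl <;> rcases hy with rfl | rfl
      · exact absurd rfl hxy
      · exact lt_abs_sub_of _ _ _ (by omega)
      · exact lt_abs_sub_of _ _ _ (by omega)
      · exact absurd rfl hxy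
  · intro n hn
    exact upper_bound_s6 S K D n (by omega) hKD hn

theorem max_hook_noncoprime_I (s k d b c : ℕ) (hs : 2 ≤ s) (hk : 0 < k) (hd : 0 < d)
    (hcop : Nat.Coprime s k) (hb : 2 ≤ b) (hc : c < b)
    (hk1 : k = 1) (hds : d < s) (H : ℕ) (hH : IsGreatest (HookLengths s k d) H) :
    IsGreatest (HookLengths (b * s) (b * k) (b * d + c)) (b * (H + 2) - 1) := by
  subst hk1
  -- Step 1: H = s - 1
  have hHle : H ≤ s - 1 := by
    obtain ⟨B, ⟨hne, hpos, h1, h2, hdist⟩, hHB⟩ := hH.1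
    by_contra hcon
    push_neg at hcon
    rcases Nat.lt_or_ge H (s + 1) with hlt | hge
    · -- H = s
      have hHs : H = s := by omega
      have h0 := h1 H hHB (by omega)
      have := hpos _ h0
      omega
    · have hx := h1 H hHB (by omega)
      have hy := h2 H hHB hge
      have hxy : H - s ≠ H - (s + 1) := by omega
      have hD := hdist _ hx _ hy hxy
      rcases abs_cases (((H - s : ℕ) : ℤ) - ((H - (s + 1) : ℕ) : ℤ)) with ⟨e, _⟩ | ⟨e, _⟩ <;>
        rw [e] at hD <;> omega
  have hHge : s - 1 ≤ H := by
    apply hH.2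
    refine ⟨{s - 1}, ⟨⟨s - 1, by simp⟩, ?_, ?_, ?_, ?_⟩, by simp⟩
    · intro x hx; simp only [Finset.mem_singleton] at hx; omega
    · intro x hx hxs; simp only [Finset.mem_singleton] at hx; omega
    · intro x hx hxs; simp only [Finset.mem_singleton] at hx; omega
    · intro x hx y hy hxy
      simp only [Finset.mem_singleton] at hx hy
      exact absurd (hx.trans hy.symm) hxy
  have hHeq : H = s - 1 := le_antisymm hHle hHge
  subst hHeq
  -- Step 2: rewrite the target
  have hbk : b * 1 = b := by ring
  have hmul : b * (d + 1) ≤ b * s := Nat.mul_le_mul (le_refl b) (by omega)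
  have hmul1 : b * 1 ≤ b * d := Nat.mul_le_mul (le_refl b) hd
  have hDS : b * d + c < b * s := by
    calc b * d + c < b * d + b := by omega
    _ = b * (d + 1) := by ring
    _ ≤ b * s := hmul
  have hKD : b ≤ b * d + c := by
    calc b = b * 1 := by ring
    _ ≤ b * d := hmul1
    _ ≤ b * d + c := Nat.le_add_right _ _
  have htarget : b * (s - 1 + 2) - 1 = b * s + b - 1 := by
    have h : s - 1 + 2 = s + 1 := by omega
    rw [h, Nat.mul_add, Nat.mul_one]
  rw [hbk, htarget]
  exact main_greatest (b * s) b (b * d + c) hb hKD hDS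
end

section
/- Let s, k, d be positive integers with s and k coprime and s ≥ 2, and let b ≥ 2 and 0 ≤ c < b be integers. If k = 1 and d ≥ s, then H_{bd+c}(bs, bk) = b·(H_d(s,k) + 1) − 1. -/
lemma mem_lt_of_le_D (S K D : ℕ) (hS : 0 < S) (hSD : S ≤ D) (B : Finset ℕ)
    (h : IsCoreBeta S K D B) : ∀ x ∈ B, x < S := by
  intro x hx
  by_contra hge
  push_neg at hge
  have hy : x - S ∈ B := h.2.2.1 x hx hge
  have hne : x ≠ x - S := by omega
  have := h.2.2.2.2 x hx (x - S) hy hne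
  rw [Nat.cast_sub hge, sub_sub_cancel, abs_of_nonneg (by positivity)] at this
  omega

lemma singleton_core (S K D n : ℕ) (hn : 0 < n) (hnS : n < S) :
    IsCoreBeta S K D {n} := by
  refine ⟨⟨n, Finset.mem_singleton_self n⟩, ?_, ?_, ?_, ?_⟩
  · intro x hx; rw [Finset.mem_singleton] at hx; omega
  · intro x hx; rw [Finset.mem_singleton] at hx; omega
  · intro x hx; rw [Finset.mem_singleton] at hx; omega
  · intro x hx y hy hne
    rw [Finset.mem_singleton] at hx hy
    exact absurd (hx.trans hy.symm) hne

theorem max_hook_noncoprime_II (s k d b c : ℕ) (hs : 2 ≤ s) (hk : 0 < k) (hd : 0 < d)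
    (hcop : Nat.Coprime s k) (hb : 2 ≤ b) (hc : c < b)
    (hk1 : k = 1) (hds : s ≤ d) (H : ℕ) (hH : IsGreatest (HookLengths s k d) H) :
    IsGreatest (HookLengths (b * s) (b * k) (b * d + c)) (b * (H + 1) - 1) := by
  -- First, H = s - 1.
  have hHle : H ≤ s - 1 := by
    obtain ⟨B, hB, hHB⟩ := hH.1
    have := mem_lt_of_le_D s k d (by omega) hds B hB H hHB
    omega
  have hHge : s - 1 ≤ H := by
    refine hH.2 ⟨{s - 1}, singleton_core s k d (s - 1) (by omega) (by omega), ?_⟩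
    exact Finset.mem_singleton_self _
  have hHeq : H = s - 1 := le_antisymm hHle hHge
  have hval : b * (H + 1) - 1 = b * s - 1 := by
    rw [hHeq]; have : s - 1 + 1 = s := by omega
    rw [this]
  rw [hval]
  constructor
  · have h4 : 4 ≤ b * s := Nat.mul_le_mul hb hs
    refine ⟨{b * s - 1}, singleton_core _ _ _ _ (by omega) (by omega), ?_⟩
    exact Finset.mem_singleton_self _
  · rintro n ⟨B, hB, hnB⟩
    have hbs : b * s ≤ b * d + c := by
      have : b * s ≤ b * d := Nat.mul_le_mul_left b hds
      omega
    have := mem_lt_of_le_D (b * s) (b * k) (b * d + c) (by positivity) hbs B hB n hnB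
    omega
end

section
/- Let s, k, d be positive integers with s and k coprime and s ≥ 2, and let b ≥ 2 and 0 ≤ c < b be integers. If d < k and either s̄·s̃ mod k = 1 or d < s̄·s̃ mod k = k − 1, then H_{bd+c}(bs, bk) = b·(H_d(s,k) + 2) − 1. -/
/-! ### Auxiliary development -/

/-- Membership in the numerical monoid generated by `S` and `S + K`. -/
def TTm (S K n : ℕ) : Prop := ∃ a b : ℕ, n = a * S + b * (S + K)

lemma TTm_zero (S K : ℕ) : TTm S K 0 := ⟨0, 0, by ring⟩

lemma TTm_add_S {S K n : ℕ} (h : TTm S K n) : TTm S K (n + S) := by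
  obtain ⟨a, b, rfl⟩ := h; exact ⟨a + 1, b, by ring⟩

lemma TTm_add_SK {S K n : ℕ} (h : TTm S K n) : TTm S K (n + (S + K)) := by
  obtain ⟨a, b, rfl⟩ := h; exact ⟨a, b + 1, by ring⟩

lemma TTm_iff' {s k n : ℕ} : TTm s k n ↔ ∃ a b : ℕ, b ≤ a ∧ n = a * s + b * k := by
  constructor
  · rintro ⟨a, b, rfl⟩; exact ⟨a + b, b, by omega, by ring⟩
  · rintro ⟨a, b, hba, rfl⟩
    refine ⟨a - b, b, ?_⟩
    have h : a - b + b = a := by omega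
    calc a * s + b * k = (a - b + b) * s + b * k := by rw [h]
      _ = (a - b) * s + b * (s + k) := by ring

lemma TTm_scale {s k b m : ℕ} (h : TTm s k m) : TTm (b * s) (b * k) (b * m) := by
  obtain ⟨a, β, rfl⟩ := h
  exact ⟨a, β, by rw [show b * s + b * k = b * (s + k) by ring]; ring⟩

lemma TTm_unscale {s k b γ : ℕ} (h : TTm (b * s) (b * k) γ) :
    ∃ m, TTm s k m ∧ γ = b * m := by
  obtain ⟨a, β, rfl⟩ := h
  exact ⟨a * s + β * (s + k), ⟨a, β, rfl⟩, by ring⟩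

lemma coreBeta_sub {S K D : ℕ} {B : Finset ℕ} (hB : IsCoreBeta S K D B) :
    ∀ a b x : ℕ, x ∈ B → a * S + b * (S + K) < x → x - (a * S + b * (S + K)) ∈ B := by
  intro a
  induction a with
  | zero =>
    intro b
    induction b with
    | zero => intro x hx _; simpa using hx
    | succ b ih =>
      intro x hx hlt
      have e : 0 * S + (b + 1) * (S + K) = 0 * S + b * (S + K) + (S + K) := by ring
      rw [e] at hlt ⊢
      have h1 : S + K ≤ x := by omega
      have hx' : x - (S + K) ∈ B := hB.2.2.2.1 x hx h1
      have h2 : 0 * S + b * (S + K) < x - (S + K) := by omega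
      have h3 := ih (x - (S + K)) hx' h2
      have e2 : x - (S + K) - (0 * S + b * (S + K)) = x - (0 * S + b * (S + K) + (S + K)) := by
        omega
      rwa [e2] at h3
  | succ a ih =>
    intro b x hx hlt
    have e : (a + 1) * S + b * (S + K) = a * S + b * (S + K) + S := by ring
    rw [e] at hlt ⊢
    have h1 : S ≤ x := by omega
    have hx' : x - S ∈ B := hB.2.2.1 x hx h1
    have h2 : a * S + b * (S + K) < x - S := by omega
    have h3 := ih b (x - S) hx' h2
    have e2 : x - S - (a * S + b * (S + K)) = x - (a * S + b * (S + K) + S) := by omega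
    rwa [e2] at h3

lemma coreBeta_sub' {S K D : ℕ} {B : Finset ℕ} (hB : IsCoreBeta S K D B) {x γ : ℕ}
    (h : TTm S K γ) (hx : x ∈ B) (hlt : γ < x) : x - γ ∈ B := by
  obtain ⟨a, b, rfl⟩ := h; exact coreBeta_sub hB a b x hx hlt

lemma coreBeta_not_TT {S K D : ℕ} {B : Finset ℕ} (hS : 0 < S)
    (hB : IsCoreBeta S K D B) {x : ℕ} (hx : x ∈ B) (h : TTm S K x) : False := by
  have hxpos : 0 < x := hB.2.1 x hx
  obtain ⟨a, b, hab⟩ := h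
  match a, b with
  | 0, 0 => simp at hab; omega
  | a + 1, b =>
      have e : x = a * S + b * (S + K) + S := by rw [hab]; ring
      have h1 : a * S + b * (S + K) < x := by omega
      have h2 : x - (a * S + b * (S + K)) ∈ B := coreBeta_sub hB a b x hx h1
      have h3 : S ∈ B := by rwa [show x - (a * S + b * (S + K)) = S by omega] at h2
      have h4 : S - S ∈ B := hB.2.2.1 S h3 le_rfl
      have h5 : 0 < S - S := hB.2.1 _ h4
      omega
  | 0, b + 1 =>
      have e : x = 0 * S + b * (S + K) + (S + K) := by rw [hab]; ring
      have h1 : 0 * S + b * (S + K) < x := by omega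
      have h2 : x - (0 * S + b * (S + K)) ∈ B := coreBeta_sub hB 0 b x hx h1
      have h3 : S + K ∈ B := by rwa [show x - (0 * S + b * (S + K)) = S + K by omega] at h2
      have h4 : S + K - (S + K) ∈ B := hB.2.2.2.1 (S + K) h3 le_rfl
      have h5 : 0 < S + K - (S + K) := hB.2.1 _ h4
      omega

lemma mem_hook {S K D n : ℕ} (hS : 0 < S) (hn : 0 < n)
    (hnT : ¬ TTm S K n)
    (hsp : ∀ γ₁ γ₂ : ℕ, TTm S K γ₁ → TTm S K γ₂ → γ₁ < γ₂ → γ₂ < n → D < γ₂ - γ₁) :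
    n ∈ HookLengths S K D := by
  classical
  set B : Finset ℕ := ((Finset.range n).filter (fun γ => TTm S K γ)).image (fun γ => n - γ)
    with hBdef
  have hmem : ∀ γ : ℕ, TTm S K γ → γ < n → n - γ ∈ B := fun γ h1 h2 =>
    Finset.mem_image.mpr ⟨γ, Finset.mem_filter.mpr ⟨Finset.mem_range.mpr h2, h1⟩, rfl⟩
  have hinv : ∀ x ∈ B, ∃ γ, TTm S K γ ∧ γ < n ∧ x = n - γ := by
    intro x hx
    obtain ⟨γ, hγ, hγx⟩ := Finset.mem_image.mp hx
    obtain ⟨h1, h2⟩ := Finset.mem_filter.mp hγ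
    exact ⟨γ, h2, Finset.mem_range.mp h1, hγx.symm⟩
  have hnB : n ∈ B := by
    have := hmem 0 (TTm_zero S K) hn
    simpa using this
  refine ⟨B, ⟨⟨n, hnB⟩, ?_, ?_, ?_, ?_⟩, hnB⟩
  · intro x hx
    obtain ⟨γ, _, h2, rfl⟩ := hinv x hx
    omega
  · intro x hx hSx
    obtain ⟨γ, h1, h2, rfl⟩ := hinv x hx
    have h3 : TTm S K (γ + S) := TTm_add_S h1
    have h4 : γ + S ≠ n := fun h => hnT (h ▸ h3)
    have h5 : γ + S < n := by omega
    have h6 := hmem _ h3 h5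
    rwa [show n - (γ + S) = n - γ - S by omega] at h6
  · intro x hx hSx
    obtain ⟨γ, h1, h2, rfl⟩ := hinv x hx
    have h3 : TTm S K (γ + (S + K)) := TTm_add_SK h1
    have h4 : γ + (S + K) ≠ n := fun h => hnT (h ▸ h3)
    have h5 : γ + (S + K) < n := by omega
    have h6 := hmem _ h3 h5
    rwa [show n - (γ + (S + K)) = n - γ - (S + K) by omega] at h6
  · intro x hx y hy hxy
    obtain ⟨γ₁, hT1, h1n, rfl⟩ := hinv x hx
    obtain ⟨γ₂, hT2, h2n, rfl⟩ := hinv y hy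
    have hne : γ₁ ≠ γ₂ := by omega
    rcases hne.lt_or_gt with h | h
    · have := hsp _ _ hT1 hT2 h h2n
      rw [lt_abs]; omega
    · have := hsp _ _ hT2 hT1 h h1n
      rw [lt_abs]; omega

lemma hook_props {S K D n : ℕ} (hS : 0 < S) (hn : n ∈ HookLengths S K D) :
    ¬ TTm S K n ∧ ∀ γ₁ γ₂ : ℕ, TTm S K γ₁ → TTm S K γ₂ → γ₁ < γ₂ → γ₂ < n →
      D < γ₂ - γ₁ := by
  obtain ⟨B, hB, hnB⟩ := hn
  refine ⟨fun h => coreBeta_not_TT hS hB hnB h, ?_⟩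
  intro γ₁ γ₂ h1 h2 h12 h2n
  have m1 : n - γ₁ ∈ B := coreBeta_sub' hB h1 hnB (by omega)
  have m2 : n - γ₂ ∈ B := coreBeta_sub' hB h2 hnB (by omega)
  have hne : n - γ₁ ≠ n - γ₂ := by omega
  have := hB.2.2.2.2 _ m1 _ m2 hne
  rw [lt_abs] at this
  omega

lemma cong_iff_dvd {s k : ℕ} (r : ℕ) (ℓ : ℤ) :
    ((r : ℤ) * ((s : ℤ) % (k : ℤ)) ≡ ℓ [ZMOD (k : ℤ)]) ↔ (k : ℤ) ∣ ℓ - (r : ℤ) * s := by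
  have base : ((s : ℤ) % (k : ℤ)) ≡ (s : ℤ) [ZMOD (k : ℤ)] := Int.emod_emod_of_dvd _ dvd_rfl
  constructor
  · intro h
    exact Int.ModEq.dvd ((base.mul_left _).symm.trans h)
  · intro h
    exact (base.mul_left _).trans (Int.modEq_iff_dvd.mpr h)


lemma close_bound (s k d σ q u₀ : ℕ)
    (hs : 2 ≤ s) (hk : 0 < k) (hd : 0 < d) (hdk : d < k) (hσ : 1 ≤ σ)
    (hmin : ∀ r ℓ : ℤ, 0 ≤ r → r < (k : ℤ) → ℓ ≠ 0 → -(d : ℤ) ≤ ℓ → ℓ ≤ (d : ℤ) →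
      (k : ℤ) ∣ ℓ - r * (s : ℤ) → (σ : ℤ) ≤ r)
    (hE : (σ * s = q * k + 1 ∧ u₀ = q * (s + k) + 1) ∨
          (σ * s + 1 = q * k ∧ d + 2 ≤ k ∧ u₀ = q * (s + k)))
    (t u : ℕ) (ht : TTm s k t) (hu : TTm s k u) (htu : t < u) (hud : u ≤ t + d) :
    u₀ ≤ u := by
  obtain ⟨a₁, b₁, hb₁, hte⟩ := TTm_iff'.mp ht
  obtain ⟨a₂, b₂, hb₂, hue⟩ := TTm_iff'.mp hu
  have hkZ : (0 : ℤ) < k := by exact_mod_cast hk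
  have hkZ' : (k : ℤ) ≠ 0 := by positivity
  have hsZ : (2 : ℤ) ≤ s := by exact_mod_cast hs
  have hdZ : (1 : ℤ) ≤ d := by exact_mod_cast hd
  have hdkZ : (d : ℤ) < k := by exact_mod_cast hdk
  have hσZ : (1 : ℤ) ≤ σ := by exact_mod_cast hσ
  obtain ⟨A, hA⟩ : ∃ A : ℤ, A = (a₂ : ℤ) - a₁ := ⟨_, rfl⟩
  obtain ⟨Bz, hBz⟩ : ∃ Bz : ℤ, Bz = (b₂ : ℤ) - b₁ := ⟨_, rfl⟩
  obtain ⟨L, hL⟩ : ∃ L : ℤ, L = (u : ℤ) - t := ⟨_, rfl⟩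
  have htZ : (t : ℤ) = a₁ * s + b₁ * k := by rw [hte]; push_cast; ring
  have huZ : (u : ℤ) = a₂ * s + b₂ * k := by rw [hue]; push_cast; ring
  have key : A * s + Bz * k = L := by rw [hA, hBz, hL, htZ, huZ]; ring
  have hL1 : 1 ≤ L := by omega
  have hLd : L ≤ d := by omega
  have hb₁Z : (b₁ : ℤ) ≤ a₁ := by exact_mod_cast hb₁
  have hb₂Z : (b₂ : ℤ) ≤ a₂ := by exact_mod_cast hb₂
  have hb₂0 : (0 : ℤ) ≤ b₂ := Int.natCast_nonneg _
  have hb₁0 : (0 : ℤ) ≤ b₁ := Int.natCast_nonneg _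
  suffices h : (u₀ : ℤ) ≤ u by exact_mod_cast h
  rcases lt_trichotomy A 0 with hA0 | hA0 | hA0
  · -- A < 0
    obtain ⟨A', hA'⟩ : ∃ A' : ℤ, A' = -A := ⟨_, rfl⟩
    have hA'1 : 1 ≤ A' := by omega
    have hBz1 : 1 ≤ Bz := by
      by_contra h'
      push_neg at h'
      have h2 : Bz * k ≤ 0 := mul_nonpos_of_nonpos_of_nonneg (by omega) (le_of_lt hkZ)
      have h3 : (s : ℤ) ≤ A' * s := le_mul_of_one_le_left (by linarith) hA'1
      have h4 : A * s = -(A' * s) := by rw [hA']; ring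
      linarith
    have hub : Bz * ((s : ℤ) + k) ≤ u := by
      have h1 : (b₂ : ℤ) * s ≤ a₂ * s := mul_le_mul_of_nonneg_right hb₂Z (by linarith)
      have h3 : Bz * ((s : ℤ) + k) ≤ b₂ * ((s : ℤ) + k) :=
        mul_le_mul_of_nonneg_right (by omega) (by linarith)
      have h4 : (b₂ : ℤ) * ((s : ℤ) + k) = b₂ * s + b₂ * k := by ring
      linarith
    obtain ⟨j', hj'def⟩ : ∃ x : ℤ, x = A' / k := ⟨_, rfl⟩
    obtain ⟨r', hr'def⟩ : ∃ x : ℤ, x = A' % k := ⟨_, rfl⟩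
    have hj' : (k : ℤ) * j' + r' = A' := by rw [hj'def, hr'def]; exact Int.mul_ediv_add_emod A' k
    have hr'0 : 0 ≤ r' := hr'def ▸ Int.emod_nonneg A' hkZ'
    have hr'k : r' < k := hr'def ▸ Int.emod_lt_of_pos A' hkZ
    have hj'0 : 0 ≤ j' := hj'def ▸ Int.ediv_nonneg (by omega) (le_of_lt hkZ)
    have hkj'0 : 0 ≤ (k : ℤ) * j' := mul_nonneg (le_of_lt hkZ) hj'0
    have hr'ne : r' ≠ 0 := by
      intro h0
      have hthis : A' = k * j' := by omega
      have hdvd : (k : ℤ) ∣ L := ⟨Bz - j' * s, by linear_combination -key - s * hthis + s * hA'⟩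
      have := Int.le_of_dvd (by omega) hdvd
      omega
    have hσr' : (σ : ℤ) ≤ r' := by
      refine hmin r' (-L) hr'0 hr'k (by omega) (by omega) (by omega) ?_
      exact ⟨j' * s - Bz, by linear_combination key - s * hj' - s * hA'⟩
    have hA'r : r' ≤ A' := by linarith [hj']
    have hBzk : Bz * k = A' * s + L := by linear_combination key - s * hA'
    rcases hE with ⟨hE1, hu0⟩ | ⟨hE2, hd2, hu0⟩
    · -- case 1 : σ*s = q*k + 1
      have hE1Z : (σ : ℤ) * s = q * k + 1 := by exact_mod_cast hE1
      have hu0Z : (u₀ : ℤ) = q * (s + k) + 1 := by rw [hu0]; push_cast; ring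
      have he : (Bz - q) * k = (A' - σ) * s + (L + 1) := by linear_combination hBzk + hE1Z
      have h5 : 0 ≤ (A' - σ) * s := mul_nonneg (by linarith) (by linarith)
      have h6 : 1 ≤ Bz - q := by
        by_contra h'
        push_neg at h'
        have : (Bz - q) * k ≤ 0 := mul_nonpos_of_nonpos_of_nonneg (by omega) (le_of_lt hkZ)
        linarith
      have h7 : ((q : ℤ) + 1) * ((s : ℤ) + k) ≤ Bz * ((s : ℤ) + k) :=
        mul_le_mul_of_nonneg_right (by omega) (by linarith)
      have h8 : ((q : ℤ) + 1) * ((s : ℤ) + k) = q * (s + k) + (s + k) := by ring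
      linarith
    · -- case 2 : σ*s + 1 = q*k
      have hE2Z : (σ : ℤ) * s + 1 = q * k := by exact_mod_cast hE2
      have hu0Z : (u₀ : ℤ) = q * (s + k) := by rw [hu0]; push_cast; ring
      have he : (Bz - q) * k = (A' - σ) * s + (L - 1) := by linear_combination hBzk + hE2Z
      have hq : (q : ℤ) ≤ Bz := by
        rcases eq_or_lt_of_le hσr' with hre | hre
        · -- r' = σ
          have hA'e : A' = k * j' + σ := by omega
          have hdvd : (k : ℤ) ∣ L - 1 := ⟨Bz - q - j' * s, by linear_combination -he - s * hA'e⟩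
          have hLe : L = 1 := by
            by_contra h'
            have := Int.le_of_dvd (by omega) hdvd
            omega
          have h9 : (Bz - q) * k = (j' * s) * k := by linear_combination he + s * hA'e + hLe
          have h10 : Bz - q = j' * s := mul_right_cancel₀ hkZ' h9
          have h11 : 0 ≤ j' * s := mul_nonneg hj'0 (by linarith)
          linarith
        · -- σ < r'
          have h5 : (s : ℤ) ≤ (A' - σ) * s := le_mul_of_one_le_left (by linarith) (by omega)
          have h6 : 1 ≤ Bz - q := by
            by_contra h'
            push_neg at h'
            have : (Bz - q) * k ≤ 0 := mul_nonpos_of_nonpos_of_nonneg (by omega) (le_of_lt hkZ)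
            linarith
          omega
      have h7 : (q : ℤ) * ((s : ℤ) + k) ≤ Bz * ((s : ℤ) + k) :=
        mul_le_mul_of_nonneg_right hq (by linarith)
      linarith
  · -- A = 0 : impossible
    exfalso
    have hdvd : (k : ℤ) ∣ L := ⟨Bz, by linear_combination -key + s * hA0⟩
    have := Int.le_of_dvd (by omega) hdvd
    omega
  · -- A > 0
    have hA1 : 1 ≤ A := by omega
    have hBzneg : Bz ≤ 0 := by
      by_contra h'
      push_neg at h'
      have h1 : (k : ℤ) ≤ Bz * k := le_mul_of_one_le_left (le_of_lt hkZ) (by omega)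
      have h2 : (s : ℤ) ≤ A * s := le_mul_of_one_le_left (by linarith) hA1
      linarith
    obtain ⟨j, hjdef⟩ : ∃ x : ℤ, x = A / k := ⟨_, rfl⟩
    obtain ⟨r, hrdef⟩ : ∃ x : ℤ, x = A % k := ⟨_, rfl⟩
    have hj : (k : ℤ) * j + r = A := by rw [hjdef, hrdef]; exact Int.mul_ediv_add_emod A k
    have hr0 : 0 ≤ r := hrdef ▸ Int.emod_nonneg A hkZ'
    have hrk : r < k := hrdef ▸ Int.emod_lt_of_pos A hkZ
    have hj0 : 0 ≤ j := hjdef ▸ Int.ediv_nonneg (by omega) (le_of_lt hkZ)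
    have hkj0 : 0 ≤ (k : ℤ) * j := mul_nonneg (le_of_lt hkZ) hj0
    have hjs0 : 0 ≤ j * (s : ℤ) := mul_nonneg hj0 (by linarith)
    have hrne : r ≠ 0 := by
      intro h0
      have hthis : A = k * j := by omega
      have hdvd : (k : ℤ) ∣ L := ⟨j * s + Bz, by linear_combination -key + s * hthis⟩
      have := Int.le_of_dvd (by omega) hdvd
      omega
    have hσr : (σ : ℤ) ≤ r := by
      refine hmin r L hr0 hrk (by omega) (by omega) (by omega) ?_
      exact ⟨j * s + Bz, by linear_combination -key - s * hj⟩
    have hAr : r ≤ A := by linarith [hj]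
    obtain ⟨m, hm⟩ : ∃ m : ℤ, m = -Bz := ⟨_, rfl⟩
    have hm0 : 0 ≤ m := by omega
    have hAs : A * s = m * k + L := by linear_combination key - k * hm
    have hb₁m : m ≤ (b₁ : ℤ) := by omega
    have ha₂ : m + A ≤ (a₂ : ℤ) := by omega
    have huge : (m + A) * s ≤ (u : ℤ) := by
      have h1 : (m + A) * s ≤ (a₂ : ℤ) * s := mul_le_mul_of_nonneg_right ha₂ (by linarith)
      have h2 : (0 : ℤ) ≤ b₂ * k := mul_nonneg hb₂0 (le_of_lt hkZ)
      linarith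
    rcases hE with ⟨hE1, hu0⟩ | ⟨hE2, hd2, hu0⟩
    · -- case 1
      have hE1Z : (σ : ℤ) * s = q * k + 1 := by exact_mod_cast hE1
      have hu0Z : (u₀ : ℤ) = q * (s + k) + 1 := by rw [hu0]; push_cast; ring
      have hqσ : (q : ℤ) + σ ≤ m + A := by
        rcases eq_or_lt_of_le hσr with hre | hre
        · -- r = σ
          have hAe : A = k * j + σ := by omega
          have hdvd : (k : ℤ) ∣ L - 1 :=
            ⟨j * s + q - m, by linear_combination -hAs + s * hAe + hE1Z⟩
          have hLe : L = 1 := by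
            by_contra h'
            have := Int.le_of_dvd (by omega) hdvd
            omega
          have h9 : (m - q) * k = (j * s) * k := by
            linear_combination -hAs + s * hAe + hE1Z - hLe
          have h10 : m - q = j * s := mul_right_cancel₀ hkZ' h9
          linarith
        · -- σ < r
          have hqm : (q : ℤ) ≤ m := by
            by_contra h'
            push_neg at h'
            have he : (A - σ) * s = (m - q) * k + (L - 1) := by linear_combination hAs - hE1Z
            have h5 : (s : ℤ) ≤ (A - σ) * s := le_mul_of_one_le_left (by linarith) (by omega)
            have h6 : (m - q) * k ≤ (-1) * k :=
              mul_le_mul_of_nonneg_right (by omega) (le_of_lt hkZ)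
            linarith
          omega
      have h7 : ((q : ℤ) + σ) * s ≤ (m + A) * s := mul_le_mul_of_nonneg_right hqσ (by linarith)
      have h8 : ((q : ℤ) + σ) * s = q * (s + k) + 1 := by linear_combination hE1Z
      linarith
    · -- case 2
      have hE2Z : (σ : ℤ) * s + 1 = q * k := by exact_mod_cast hE2
      have hu0Z : (u₀ : ℤ) = q * (s + k) := by rw [hu0]; push_cast; ring
      have hd2Z : (d : ℤ) + 2 ≤ k := by exact_mod_cast hd2
      have hre : (σ : ℤ) < r := by
        rcases eq_or_lt_of_le hσr with hre | hre
        · exfalso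
          have hAe : A = k * j + σ := by omega
          have hdvd : (k : ℤ) ∣ L + 1 :=
            ⟨j * s + q - m, by linear_combination -hAs + s * hAe + hE2Z⟩
          have := Int.le_of_dvd (by omega) hdvd
          omega
        · exact hre
      have hqm : (q : ℤ) ≤ m := by
        by_contra h'
        push_neg at h'
        have he : (A - σ) * s = (m - q) * k + (L + 1) := by linear_combination hAs - hE2Z
        have h5 : (s : ℤ) ≤ (A - σ) * s := le_mul_of_one_le_left (by linarith) (by omega)
        have h6 : (m - q) * k ≤ (-1) * k :=
          mul_le_mul_of_nonneg_right (by omega) (le_of_lt hkZ)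
        linarith
      have hqσ : (q : ℤ) + σ + 1 ≤ m + A := by omega
      have h7 : ((q : ℤ) + σ + 1) * s ≤ (m + A) * s :=
        mul_le_mul_of_nonneg_right hqσ (by linarith)
      have h8 : ((q : ℤ) + σ + 1) * s = q * (s + k) + (s - 1) := by linear_combination hE2Z
      linarith


theorem max_hook_noncoprime_III (s k d b c : ℕ) (hs : 2 ≤ s) (hk : 0 < k) (hd : 0 < d)
    (hcop : Nat.Coprime s k) (hb : 2 ≤ b) (hc : c < b) (hdk : d < k)
    (hcase : (s % k * stilde s k d) % k = 1 ∨
      (d < (s % k * stilde s k d) % k ∧ (s % k * stilde s k d) % k = k - 1))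
    (H : ℕ) (hH : IsGreatest (HookLengths s k d) H) :
    IsGreatest (HookLengths (b * s) (b * k) (b * d + c)) (b * (H + 2) - 1) := by
  have hk2 : 2 ≤ k := by omega
  have hs0 : 0 < s := by omega
  set σ := stilde s k d with hσdef
  -- basic facts about σ
  obtain ⟨mm, -, hmm⟩ := Nat.exists_mul_mod_eq_one_of_coprime hcop (by omega)
  have hne : {r : ℕ | r < k ∧ ∃ ℓ : ℤ, ℓ ≠ 0 ∧ -(d : ℤ) ≤ ℓ ∧ ℓ ≤ (d : ℤ) ∧
      (r : ℤ) * ((s : ℤ) % (k : ℤ)) ≡ ℓ [ZMOD (k : ℤ)]}.Nonempty := by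
    refine ⟨mm % k, Nat.mod_lt _ (by omega), 1, one_ne_zero, by omega, by omega, ?_⟩
    rw [cong_iff_dvd]
    have h1 : ((mm % k) * s) % k = 1 := by
      rw [Nat.mod_mul_mod]
      rwa [Nat.mul_comm]
    have h3 : (((mm % k : ℕ) * s : ℕ) : ℤ) % (k : ℤ) = 1 := by
      rw [← Int.natCast_mod]; exact_mod_cast h1
    have h4 := Int.dvd_self_sub_of_emod_eq h3
    have h5 : (((mm % k : ℕ) * s : ℕ) : ℤ) - 1 = -(1 - ((mm % k : ℕ) : ℤ) * s) := by
      push_cast; ring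
    rw [h5] at h4
    exact (dvd_neg.mp h4)
  have hmem : σ ∈ {r : ℕ | r < k ∧ ∃ ℓ : ℤ, ℓ ≠ 0 ∧ -(d : ℤ) ≤ ℓ ∧ ℓ ≤ (d : ℤ) ∧
      (r : ℤ) * ((s : ℤ) % (k : ℤ)) ≡ ℓ [ZMOD (k : ℤ)]} := Nat.sInf_mem hne
  have hminZ : ∀ r ℓ : ℤ, 0 ≤ r → r < (k : ℤ) → ℓ ≠ 0 → -(d : ℤ) ≤ ℓ → ℓ ≤ (d : ℤ) →
      (k : ℤ) ∣ ℓ - r * (s : ℤ) → (σ : ℤ) ≤ r := by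
    intro r ℓ h0 hk' hℓ0 hℓ1 hℓ2 hdvd
    lift r to ℕ using h0
    have : σ ≤ r := by
      apply Nat.sInf_le
      exact ⟨by exact_mod_cast hk', ℓ, hℓ0, hℓ1, hℓ2, (cong_iff_dvd r ℓ).mpr hdvd⟩
    exact_mod_cast this
  have hσ1 : 1 ≤ σ := by
    by_contra h'
    have h0 : σ = 0 := by omega
    obtain ⟨-, ℓ, hℓ0, h1, h2, hcong⟩ := hmem
    have hdvd0 := (cong_iff_dvd σ ℓ).mp hcong
    have hz : ((σ : ℕ) : ℤ) = 0 := by exact_mod_cast h0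
    rw [hz] at hdvd0
    have hdvd : (k : ℤ) ∣ ℓ := by simpa using hdvd0
    have habs : (k : ℤ) ∣ |ℓ| := (dvd_abs _ _).mpr hdvd
    have := Int.le_of_dvd (abs_pos.mpr hℓ0) habs
    have h3 : |ℓ| ≤ (d : ℤ) := abs_le.mpr ⟨h1, h2⟩
    have h4 : (d : ℤ) < k := by exact_mod_cast hdk
    omega
  have hσs : s ≤ σ * s := Nat.le_mul_of_pos_left s (by omega)
  -- the key package
  obtain ⟨u₀, pair1, pair2, hu₀3, hclose⟩ :
      ∃ u₀ : ℕ, TTm s k (u₀ - 1) ∧ TTm s k u₀ ∧ 3 ≤ u₀ ∧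
        (∀ t u : ℕ, TTm s k t → TTm s k u → t < u → u ≤ t + d → u₀ ≤ u) := by
    have e : (s % k * σ) % k = (s * σ) % k := Nat.mod_mul_mod _ _ _
    rcases hcase with hc1 | ⟨hc2a, hc2b⟩
    · -- case 1
      have h1 : (σ * s) % k = 1 := by rw [Nat.mul_comm σ s, ← e]; exact hc1
      obtain ⟨q, hq⟩ : ∃ q, σ * s = q * k + 1 := by
        refine ⟨σ * s / k, ?_⟩
        have h2 := Nat.div_add_mod (σ * s) k
        have hcomm : k * (σ * s / k) = (σ * s / k) * k := Nat.mul_comm _ _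
        omega
      have hq1 : 1 ≤ q := by
        rcases Nat.eq_zero_or_pos q with h | h
        · rw [h] at hq; omega
        · exact h
      have hsk : s + k ≤ q * (s + k) := Nat.le_mul_of_pos_left (s + k) hq1
      refine ⟨q * (s + k) + 1, ?_, ?_, by omega, ?_⟩
      · exact ⟨0, q, by omega⟩
      · refine ⟨q + σ, 0, ?_⟩
        have a1 : (q + σ) * s = q * s + σ * s := by ring
        have a2 : q * (s + k) = q * s + q * k := by ring
        omega
      · intro t u ht hu htu hud
        exact close_bound s k d σ q (q * (s + k) + 1) hs hk hd hdk hσ1 hminZ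
          (Or.inl ⟨hq, rfl⟩) t u ht hu htu hud
    · -- case 2
      have h1 : (σ * s) % k = k - 1 := by rw [Nat.mul_comm σ s, ← e]; exact hc2b
      have hd2 : d + 2 ≤ k := by
        rw [hc2b] at hc2a; omega
      obtain ⟨q, hq⟩ : ∃ q, σ * s + 1 = q * k := by
        refine ⟨σ * s / k + 1, ?_⟩
        have h2 := Nat.div_add_mod (σ * s) k
        have hcomm : (σ * s / k + 1) * k = k * (σ * s / k) + k := by ring
        omega
      have hq1 : 1 ≤ q := by
        rcases Nat.eq_zero_or_pos q with h | h
        · rw [h] at hq; omega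
        · exact h
      have hsk : s + k ≤ q * (s + k) := Nat.le_mul_of_pos_left (s + k) hq1
      refine ⟨q * (s + k), ?_, ?_, by omega, ?_⟩
      · refine ⟨q + σ, 0, ?_⟩
        have a1 : (q + σ) * s = q * s + σ * s := by ring
        have a2 : q * (s + k) = q * s + q * k := by ring
        omega
      · exact ⟨0, q, by omega⟩
      · intro t u ht hu htu hud
        exact close_bound s k d σ q (q * (s + k)) hs hk hd hdk hσ1 hminZ
          (Or.inr ⟨hq, hd2, rfl⟩) t u ht hu htu hud
  -- identify u₀ = H + 2
  obtain ⟨hHnT, hHsp⟩ := hook_props hs0 hH.1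
  have hu₀H : H + 2 ≤ u₀ := by
    by_contra h'
    push_neg at h'
    rcases (by omega : u₀ < H ∨ u₀ = H ∨ u₀ = H + 1) with h | h | h
    · have := hHsp (u₀ - 1) u₀ pair1 pair2 (by omega) h
      omega
    · exact hHnT (h ▸ pair2)
    · refine hHnT ?_
      have e : u₀ - 1 = H := by omega
      exact e ▸ pair1
  have hmem2 : u₀ - 2 ∈ HookLengths s k d := by
    refine mem_hook hs0 (by omega) ?_ ?_
    · intro hT
      have := hclose (u₀ - 2) (u₀ - 1) hT pair1 (by omega) (by omega)
      omega
    · intro γ₁ γ₂ hT1 hT2 h12 h2n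
      by_contra hle
      push_neg at hle
      have := hclose γ₁ γ₂ hT1 hT2 h12 (by omega)
      omega
  have hHeq : H = u₀ - 2 := le_antisymm (by omega) (hH.2 hmem2)
  have tH1 : TTm s k (H + 1) := by
    have e : H + 1 = u₀ - 1 := by omega
    exact e ▸ pair1
  have tH2 : TTm s k (H + 2) := by
    have e : H + 2 = u₀ := by omega
    exact e ▸ pair2
  have sparse1 : ∀ γ₁ γ₂ : ℕ, TTm s k γ₁ → TTm s k γ₂ → γ₁ < γ₂ → γ₂ ≤ H + 1 →
      d < γ₂ - γ₁ := by
    intro γ₁ γ₂ h1 h2 h12 h2n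
    by_contra hle
    push_neg at hle
    have := hclose γ₁ γ₂ h1 h2 h12 (by omega)
    omega
  -- final assembly
  have hbs0 : 0 < b * s := Nat.mul_pos (by omega) hs0
  have h4' : 2 * 2 ≤ b * (H + 2) := Nat.mul_le_mul hb (by omega)
  have h4 : 4 ≤ b * (H + 2) := by omega
  constructor
  · -- membership
    refine mem_hook hbs0 (by omega) ?_ ?_
    · intro hT
      obtain ⟨m, hmT, hme⟩ := TTm_unscale hT
      rcases le_or_gt m (H + 1) with h | h
      · have e2 : b * (m + 1) ≤ b * (H + 2) := Nat.mul_le_mul_left b (by omega)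
        have e3 : b * (m + 1) = b * m + b := by ring
        omega
      · have e2 : b * (H + 2) ≤ b * m := Nat.mul_le_mul_left b (by omega)
        omega
    · intro γ₁ γ₂ hT1 hT2 h12 h2n
      obtain ⟨m₁, hm₁T, rfl⟩ := TTm_unscale hT1
      obtain ⟨m₂, hm₂T, rfl⟩ := TTm_unscale hT2
      have hm12 : m₁ < m₂ := Nat.lt_of_mul_lt_mul_left h12
      have hm2 : m₂ ≤ H + 1 := by
        by_contra h'
        push_neg at h'
        have e6 : b * (H + 2) ≤ b * m₂ := Nat.mul_le_mul_left b (by omega)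
        omega
      have hd' := sparse1 m₁ m₂ hm₁T hm₂T hm12 hm2
      have e2 : b * (m₁ + (d + 1)) ≤ b * m₂ := Nat.mul_le_mul_left b (by omega)
      have e3 : b * (m₁ + (d + 1)) = b * m₁ + b * d + b := by ring
      omega
  · -- upper bound
    intro n hn
    obtain ⟨hnT, hnsp⟩ := hook_props hbs0 hn
    by_contra hgt
    push_neg at hgt
    have g2 : TTm (b * s) (b * k) (b * (H + 2)) := TTm_scale tH2
    have g1 : TTm (b * s) (b * k) (b * (H + 1)) := TTm_scale tH1
    have e : b * (H + 2) = b * (H + 1) + b := by ring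
    rcases eq_or_lt_of_le (show b * (H + 2) ≤ n by omega) with he | hlt
    · exact hnT (he ▸ g2)
    · have hsp := hnsp _ _ g1 g2 (by omega) hlt
      have e4 : b * 1 ≤ b * d := Nat.mul_le_mul_left b hd
      have e5 : b * 1 = b := by ring
      omega
end

section
/- Let s, k, d be positive integers with s and k coprime and s ≥ 2, and let b ≥ 2 and 0 ≤ c < b be integers. If k > 1 and either 1 < s̄·s̃ mod k ≤ d, or d < s̄·s̃ mod k < k − 1, or d ≥ k, then H_{bd+c}(bs, bk) = b·(H_d(s,k) + 1) − 1. -/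
namespace MaxHookIV


def IsRep (s k n : ℕ) : Prop := ∃ a b : ℕ, n = a * s + b * (s + k)

lemma isRep_zero (s k : ℕ) : IsRep s k 0 := ⟨0, 0, by ring⟩

lemma isRep_s (s k : ℕ) : IsRep s k s := ⟨1, 0, by ring⟩

lemma isRep_sk (s k : ℕ) : IsRep s k (s + k) := ⟨0, 1, by ring⟩

lemma IsRep.add_s {s k n : ℕ} (h : IsRep s k n) : IsRep s k (n + s) := by
  obtain ⟨a, b, rfl⟩ := h; exact ⟨a + 1, b, by ring⟩

lemma IsRep.add_sk {s k n : ℕ} (h : IsRep s k n) : IsRep s k (n + (s + k)) := by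
  obtain ⟨a, b, rfl⟩ := h; exact ⟨a, b + 1, by ring⟩

lemma rep_ge {s k n : ℕ} (h : IsRep s k n) (hn : n ≠ 0) : s ≤ n := by
  obtain ⟨a, b, rfl⟩ := h
  rcases Nat.eq_zero_or_pos a with rfl | ha
  · rcases Nat.eq_zero_or_pos b with rfl | hb
    · simp at hn
    · have h1 : 1 * (s + k) ≤ b * (s + k) := Nat.mul_le_mul_right _ hb
      have h2 : (0:ℕ) ≤ 0 * s := Nat.zero_le _
      linarith
  · have h1 : 1 * s ≤ a * s := Nat.mul_le_mul_right _ ha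
    have h2 : (0:ℕ) ≤ b * (s + k) := Nat.zero_le _
    linarith

def Pset (s k d : ℕ) : Set ℕ :=
  {v | IsRep s k v ∧ ∃ w, IsRep s k w ∧ w < v ∧ v ≤ w + d}

noncomputable def tprime (s k d : ℕ) : ℕ := sInf (Pset s k d)

lemma spread {s k d : ℕ} (hP : (Pset s k d).Nonempty) {v w : ℕ}
    (hv : IsRep s k v) (hw : IsRep s k w) (hwv : w < v) (hvt : v < tprime s k d) :
    w + d < v := by
  by_contra hcon
  push_neg at hcon
  have hmem : v ∈ Pset s k d := ⟨hv, w, hw, hwv, hcon⟩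
  have := Nat.sInf_le hmem
  unfold tprime at hvt
  omega

lemma Pset_nonempty {s k : ℕ} (d : ℕ) (hs : 2 ≤ s) (hk : 1 ≤ k)
    (hcop : Nat.Coprime s k) (hd : 0 < d) : (Pset s k d).Nonempty := by
  obtain ⟨i, hi1, hik⟩ : ∃ i : ℕ, 1 ≤ i ∧ i * k % s = 1 := by
    have hbez := Nat.gcd_eq_gcd_ab s k
    rw [hcop.gcd_eq_one] at hbez
    have hs0 : (0:ℤ) < (s:ℤ) := by exact_mod_cast (by omega : 0 < s)
    set B0 : ℤ := Nat.gcdB s k with hB0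
    set A0 : ℤ := Nat.gcdA s k with hA0
    have hbez' : (1:ℤ) = s * A0 + k * B0 := by exact_mod_cast hbez
    set i0 : ℤ := B0 % s with hi0def
    have hi0 : 0 ≤ i0 := Int.emod_nonneg _ (by omega)
    have hmod : (i0 * k) % s = 1 := by
      have h1 : (i0 * k) % s = (B0 * k) % s := by
        rw [hi0def, Int.mul_emod, Int.emod_emod_of_dvd _ dvd_rfl, ← Int.mul_emod]
      have h2 : B0 * k = 1 + s * (-A0) := by linarith
      rw [h1, h2, Int.add_mul_emod_self_left]
      exact Int.emod_eq_of_lt (by norm_num) (by exact_mod_cast hs)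
    refine ⟨i0.toNat, ?_, ?_⟩
    · rcases Nat.eq_zero_or_pos i0.toNat with h0 | h1
      · exfalso
        have : i0 = 0 := by omega
        rw [this] at hmod; simp at hmod
      · exact h1
    · have hcast : ((i0.toNat * k % s : ℕ) : ℤ) = (i0 * k) % s := by
        push_cast [Int.toNat_of_nonneg hi0]
        rfl
      have : ((i0.toNat * k % s : ℕ) : ℤ) = 1 := by rw [hcast, hmod]
      exact_mod_cast this
  have hdm : s * (i * k / s) + 1 = i * k := by
    have := Nat.div_add_mod (i * k) s
    omega
  set j := i * k / s with hj
  refine ⟨(i + j) * s + 1, ⟨0, i, ?_⟩, (i + j) * s, ⟨i + j, 0, by ring⟩, by omega, ?_⟩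
  · have e1 : i * (s + k) = i * s + i * k := by ring
    have e2 : (i + j) * s = i * s + j * s := by ring
    have e3 : s * j = j * s := by ring
    linarith
  · omega

/-- Core: in case A (`q*s = β*k - 1`, `t' = (q+β)*s + 1 = β*(s+k)`), no residue
`r < q` admits `r*s ≡ ℓ (mod k)` with `0 < |ℓ| ≤ d`. -/
lemma subA {s k d q β : ℕ} (hd : 0 < d) (hk : 1 < k) (hsd : d < s)
    (hP : (Pset s k d).Nonempty) (hβ : 0 < β)
    (hqs : (q : ℤ) * s = (β : ℤ) * k - 1)
    (htp : (tprime s k d : ℤ) = ((q : ℤ) + β) * s + 1) :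
    ∀ (r j : ℕ) (ℓ : ℤ), 1 ≤ r → r < q → ℓ ≠ 0 → |ℓ| ≤ d →
      (r : ℤ) * s = (j : ℤ) * k + ℓ → False := by
  intro r j ℓ hr1 hrq hl0 hld heq
  have hs0 : (0:ℤ) < s := by exact_mod_cast (by omega : 0 < s)
  have hk0 : (0:ℤ) < k := by exact_mod_cast (by omega : 0 < k)
  have hdZ : (1:ℤ) ≤ d := by exact_mod_cast hd
  have hsdZ : (d:ℤ) < s := by exact_mod_cast hsd
  have hβZ : (1:ℤ) ≤ β := by exact_mod_cast hβ
  have hrqZ : (r:ℤ) + 1 ≤ q := by exact_mod_cast hrq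
  have hr1Z : (1:ℤ) ≤ r := by exact_mod_cast hr1
  have hrs_le : (r:ℤ) * s ≤ ((q:ℤ) - 1) * s :=
    mul_le_mul_of_nonneg_right (by linarith) (le_of_lt hs0)
  have hqm1 : ((q:ℤ) - 1) * s = q * s - s := by ring
  rcases lt_or_gt_of_ne hl0 with hneg | hpos
  · -- ℓ < 0
    have habs : -ℓ ≤ d := by rw [abs_of_neg hneg] at hld; exact hld
    have hjk : (j:ℤ) * k < (β:ℤ) * k := by linarith
    have hjβ : (j:ℤ) ≤ (β:ℤ) - 1 := by
      have := lt_of_mul_lt_mul_right hjk (le_of_lt hk0)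
      linarith
    set L : ℕ := (-ℓ).toNat with hLdef
    have hL : (L:ℤ) = -ℓ := Int.toNat_of_nonneg (by linarith)
    have hL1 : 1 ≤ L := by
      have : (1:ℤ) ≤ L := by rw [hL]; linarith
      exact_mod_cast this
    have hLd' : L ≤ d := by
      have : (L:ℤ) ≤ d := by rw [hL]; exact habs
      exact_mod_cast this
    have hpair : j * (s + k) = (r + j) * s + L := by
      have : ((j * (s + k) : ℕ) : ℤ) = (((r + j) * s + L : ℕ) : ℤ) := by
        push_cast
        have e : ((j:ℤ)) * (s + k) = j * s + j * k := by ring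
        have e2 : ((r:ℤ) + j) * s = r * s + j * s := by ring
        rw [hL]; linarith
      exact_mod_cast this
    have hvt : j * (s + k) < tprime s k d := by
      have : ((j * (s + k) : ℕ) : ℤ) < (tprime s k d : ℤ) := by
        push_cast
        have hjs : (j:ℤ) * (s + k) ≤ ((β:ℤ) - 1) * (s + k) :=
          mul_le_mul_of_nonneg_right hjβ (by linarith)
        have e : ((β:ℤ) - 1) * (s + k) = β * k + β * s - s - k := by ring
        have e2 : ((q:ℤ) + β) * s = q * s + β * s := by ring
        linarith
      exact_mod_cast this
    have hwv : (r + j) * s < j * (s + k) := by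
      rw [hpair]; omega
    have := spread hP ⟨0, j, by ring⟩ ⟨r + j, 0, by ring⟩ hwv hvt
    omega
  · -- ℓ > 0
    have habs : ℓ ≤ d := by rw [abs_of_pos hpos] at hld; exact hld
    have hjk : (j:ℤ) * k < (β:ℤ) * k := by linarith
    have hjβ : (j:ℤ) ≤ (β:ℤ) - 1 := by
      have := lt_of_mul_lt_mul_right hjk (le_of_lt hk0)
      linarith
    set L : ℕ := ℓ.toNat with hLdef
    have hL : (L:ℤ) = ℓ := Int.toNat_of_nonneg (by linarith)
    have hL1 : 1 ≤ L := by
      have : (1:ℤ) ≤ L := by rw [hL]; linarith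
      exact_mod_cast this
    have hLd' : L ≤ d := by
      have : (L:ℤ) ≤ d := by rw [hL]; exact habs
      exact_mod_cast this
    have hpair : (r + j) * s = j * (s + k) + L := by
      have : (((r + j) * s : ℕ) : ℤ) = ((j * (s + k) + L : ℕ) : ℤ) := by
        push_cast
        have e : ((j:ℤ)) * (s + k) = j * s + j * k := by ring
        have e2 : ((r:ℤ) + j) * s = r * s + j * s := by ring
        rw [hL]; linarith
      exact_mod_cast this
    have hvt : (r + j) * s < tprime s k d := by
      have : (((r + j) * s : ℕ) : ℤ) < (tprime s k d : ℤ) := by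
        push_cast
        have hsum : ((r:ℤ) + j) ≤ (q:ℤ) + β - 2 := by linarith
        have hmm : ((r:ℤ) + j) * s ≤ ((q:ℤ) + β - 2) * s :=
          mul_le_mul_of_nonneg_right hsum (le_of_lt hs0)
        have e : ((q:ℤ) + β - 2) * s = (q + β) * s - 2 * s := by ring
        linarith
      exact_mod_cast this
    have hwv : j * (s + k) < (r + j) * s := by
      rw [hpair]; omega
    have := spread hP ⟨r + j, 0, by ring⟩ ⟨0, j, by ring⟩ hwv hvt
    omega

/-- Core: case B (`q*s = β*k + 1`, `t' = (q+β)*s`, `β*(s+k) = t' - 1`). -/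
lemma subB {s k d q β : ℕ} (hd : 0 < d) (hk : 1 < k) (hsd : d < s)
    (hP : (Pset s k d).Nonempty) (hβ : 0 < β)
    (hqs : (q : ℤ) * s = (β : ℤ) * k + 1)
    (htp : (tprime s k d : ℤ) = ((q : ℤ) + β) * s) :
    ∀ (r j : ℕ) (ℓ : ℤ), 1 ≤ r → r < q → ℓ ≠ 0 → |ℓ| ≤ d →
      (r : ℤ) * s = (j : ℤ) * k + ℓ → False := by
  intro r j ℓ hr1 hrq hl0 hld heq
  have hs0 : (0:ℤ) < s := by exact_mod_cast (by omega : 0 < s)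
  have hk0 : (0:ℤ) < k := by exact_mod_cast (by omega : 0 < k)
  have hdZ : (1:ℤ) ≤ d := by exact_mod_cast hd
  have hsdZ : (d:ℤ) < s := by exact_mod_cast hsd
  have hβZ : (1:ℤ) ≤ β := by exact_mod_cast hβ
  have hrqZ : (r:ℤ) + 1 ≤ q := by exact_mod_cast hrq
  have hr1Z : (1:ℤ) ≤ r := by exact_mod_cast hr1
  have hrs_le : (r:ℤ) * s ≤ ((q:ℤ) - 1) * s :=
    mul_le_mul_of_nonneg_right (by linarith) (le_of_lt hs0)
  have hqm1 : ((q:ℤ) - 1) * s = q * s - s := by ring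
  rcases lt_or_gt_of_ne hl0 with hneg | hpos
  · -- ℓ < 0 : j*k = r*s - ℓ ≤ (q-1)*s + d < q*s = β*k + 1, so j ≤ β
    have habs : -ℓ ≤ d := by rw [abs_of_neg hneg] at hld; exact hld
    have hjk : (j:ℤ) * k < (β:ℤ) * k + 1 := by linarith
    have hjβ : (j:ℤ) ≤ (β:ℤ) := by
      by_contra hcon
      push_neg at hcon
      have h1 : ((β:ℤ) + 1) * k ≤ (j:ℤ) * k :=
        mul_le_mul_of_nonneg_right (by linarith) (le_of_lt hk0)
      have e : ((β:ℤ) + 1) * k = β * k + k := by ring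
      linarith
    set L : ℕ := (-ℓ).toNat with hLdef
    have hL : (L:ℤ) = -ℓ := Int.toNat_of_nonneg (by linarith)
    have hL1 : 1 ≤ L := by
      have : (1:ℤ) ≤ L := by rw [hL]; linarith
      exact_mod_cast this
    have hLd' : L ≤ d := by
      have : (L:ℤ) ≤ d := by rw [hL]; exact habs
      exact_mod_cast this
    have hpair : j * (s + k) = (r + j) * s + L := by
      have : ((j * (s + k) : ℕ) : ℤ) = (((r + j) * s + L : ℕ) : ℤ) := by
        push_cast
        have e : ((j:ℤ)) * (s + k) = j * s + j * k := by ring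
        have e2 : ((r:ℤ) + j) * s = r * s + j * s := by ring
        rw [hL]; linarith
      exact_mod_cast this
    have hvt : j * (s + k) < tprime s k d := by
      have : ((j * (s + k) : ℕ) : ℤ) < (tprime s k d : ℤ) := by
        push_cast
        have hjs : (j:ℤ) * (s + k) ≤ (β:ℤ) * (s + k) :=
          mul_le_mul_of_nonneg_right hjβ (by linarith)
        have e : (β:ℤ) * (s + k) = β * k + β * s := by ring
        have e2 : ((q:ℤ) + β) * s = q * s + β * s := by ring
        linarith
      exact_mod_cast this
    have hwv : (r + j) * s < j * (s + k) := by
      rw [hpair]; omega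
    have := spread hP ⟨0, j, by ring⟩ ⟨r + j, 0, by ring⟩ hwv hvt
    omega
  · -- ℓ > 0 : j*k = r*s - ℓ ≤ (q-1)*s - 1 = β*k - s, so j ≤ β - 1
    have habs : ℓ ≤ d := by rw [abs_of_pos hpos] at hld; exact hld
    have hjk : (j:ℤ) * k < (β:ℤ) * k := by linarith
    have hjβ : (j:ℤ) ≤ (β:ℤ) - 1 := by
      have := lt_of_mul_lt_mul_right hjk (le_of_lt hk0)
      linarith
    set L : ℕ := ℓ.toNat with hLdef
    have hL : (L:ℤ) = ℓ := Int.toNat_of_nonneg (by linarith)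
    have hL1 : 1 ≤ L := by
      have : (1:ℤ) ≤ L := by rw [hL]; linarith
      exact_mod_cast this
    have hLd' : L ≤ d := by
      have : (L:ℤ) ≤ d := by rw [hL]; exact habs
      exact_mod_cast this
    have hpair : (r + j) * s = j * (s + k) + L := by
      have : (((r + j) * s : ℕ) : ℤ) = ((j * (s + k) + L : ℕ) : ℤ) := by
        push_cast
        have e : ((j:ℤ)) * (s + k) = j * s + j * k := by ring
        have e2 : ((r:ℤ) + j) * s = r * s + j * s := by ring
        rw [hL]; linarith
      exact_mod_cast this
    have hvt : (r + j) * s < tprime s k d := by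
      have : (((r + j) * s : ℕ) : ℤ) < (tprime s k d : ℤ) := by
        push_cast
        have hsum : ((r:ℤ) + j) ≤ (q:ℤ) + β - 2 := by linarith
        have hmm : ((r:ℤ) + j) * s ≤ ((q:ℤ) + β - 2) * s :=
          mul_le_mul_of_nonneg_right hsum (le_of_lt hs0)
        have e : ((q:ℤ) + β - 2) * s = (q + β) * s - 2 * s := by ring
        linarith
      exact_mod_cast this
    have hwv : j * (s + k) < (r + j) * s := by
      rw [hpair]; omega
    have := spread hP ⟨r + j, 0, by ring⟩ ⟨0, j, by ring⟩ hwv hvt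
    omega

/-- mod-k congruence transfer: `r * (s % k) ≡ r * s  [ZMOD k]`. -/
lemma mod_transfer (s k : ℕ) (r : ℤ) :
    (r : ℤ) * ((s : ℤ) % (k : ℤ)) ≡ r * s [ZMOD (k : ℤ)] :=
  Int.ModEq.mul_left r (Int.emod_emod_of_dvd _ dvd_rfl)

/-- In case A, `stilde = q` and `(s%k * q) % k = k - 1`, `d + 1 < k`: contradiction with hcase. -/
lemma caseA {s k d : ℕ} (hs : 2 ≤ s) (hk : 1 < k) (hd : 0 < d)
    (hP : (Pset s k d).Nonempty) {m β : ℕ} (hm : 0 < m) (hβ : 0 < β)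
    (hts : tprime s k d = m * s + 1) (htk : tprime s k d = β * (s + k)) :
    ¬ ((1 < (s % k * stilde s k d) % k ∧ (s % k * stilde s k d) % k ≤ d) ∨
      (d < (s % k * stilde s k d) % k ∧ (s % k * stilde s k d) % k < k - 1) ∨ k ≤ d) := by
  have hs0 : (0:ℤ) < s := by exact_mod_cast (by omega : 0 < s)
  have hk0 : (0:ℤ) < k := by exact_mod_cast (by omega : 0 < k)
  have hk2 : (2:ℤ) ≤ k := by exact_mod_cast hk
  have hβZ : (1:ℤ) ≤ β := by exact_mod_cast hβ
  have hmZ : (1:ℤ) ≤ m := by exact_mod_cast hm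
  have heqZ : (m:ℤ) * s + 1 = (β:ℤ) * (s + k) := by
    have : ((m * s + 1 : ℕ) : ℤ) = ((β * (s + k) : ℕ) : ℤ) := by
      rw [← hts, ← htk]
    push_cast at this; linarith
  have hβk : (β:ℤ) * (s + k) = β * s + β * k := by ring
  -- β ≤ m
  have hβm : β ≤ m := by
    by_contra hcon
    push_neg at hcon
    have h1 : ((m:ℤ) + 1) ≤ β := by exact_mod_cast hcon
    have h2 : ((m:ℤ) + 1) * s ≤ (β:ℤ) * s :=
      mul_le_mul_of_nonneg_right h1 (le_of_lt hs0)
    have h3 : (1:ℤ) * k ≤ (β:ℤ) * k := mul_le_mul_of_nonneg_right hβZ (le_of_lt hk0)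
    nlinarith
  set q : ℕ := m - β with hqdef
  have hqZ : (q:ℤ) = (m:ℤ) - β := by
    rw [hqdef]; push_cast [Nat.cast_sub hβm]; ring
  have hqs : (q:ℤ) * s = (β:ℤ) * k - 1 := by
    rw [hqZ]
    have e : ((m:ℤ) - β) * s = m * s - β * s := by ring
    linarith
  have hq1 : 1 ≤ q := by
    rcases Nat.eq_zero_or_pos q with h0 | h1
    · exfalso
      rw [h0] at hqs
      simp at hqs
      have : (1:ℤ) * k ≤ (β:ℤ) * k := mul_le_mul_of_nonneg_right hβZ (le_of_lt hk0)
      linarith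
    · exact h1
  have hq1Z : (1:ℤ) ≤ q := by exact_mod_cast hq1
  -- d < s
  have hsd : d < s := by
    have h1 : s < tprime s k d := by
      rw [hts]
      have : 1 * s ≤ m * s := Nat.mul_le_mul_right _ hm
      omega
    have := spread hP (⟨1, 0, by ring⟩ : IsRep s k s) (⟨0, 0, by ring⟩ : IsRep s k 0) (by omega) h1
    omega
  have hsdZ : (d:ℤ) < s := by exact_mod_cast hsd
  have hdZ : (1:ℤ) ≤ d := by exact_mod_cast hd
  -- t' in ℤ-form
  have htpZ : (tprime s k d : ℤ) = ((q : ℤ) + β) * s + 1 := by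
    rw [hts]; push_cast
    have e : ((q:ℤ) + β) * s = q * s + β * s := by ring
    rw [e, hqZ]
    ring
  -- d + 1 < k
  have hdk1 : d + 1 < k := by
    by_cases hβ2 : 2 ≤ β
    · -- pair ((β-1)*(s+k), (m-1)*s) at distance k-1
      have hβ2Z : (2:ℤ) ≤ β := by exact_mod_cast hβ2
      have hm2 : 2 ≤ m := by omega
      have hveq : (m - 1) * s = (β - 1) * (s + k) + (k - 1) := by
        have : (((m - 1) * s : ℕ) : ℤ) = (((β - 1) * (s + k) + (k - 1) : ℕ) : ℤ) := by
          push_cast [Nat.cast_sub (by omega : 1 ≤ m), Nat.cast_sub (by omega : 1 ≤ β),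
            Nat.cast_sub (by omega : 1 ≤ k)]
          linarith [heqZ, hβk]
        exact_mod_cast this
      have hvt : (m - 1) * s < tprime s k d := by
        rw [hts]
        have : (m - 1) * s ≤ m * s := Nat.mul_le_mul_right _ (by omega)
        omega
      have hwv : (β - 1) * (s + k) < (m - 1) * s := by
        rw [hveq]; omega
      have := spread hP (⟨m - 1, 0, by ring⟩ : IsRep s k ((m - 1) * s))
        (⟨0, β - 1, by ring⟩ : IsRep s k ((β - 1) * (s + k))) hwv hvt
      omega
    · -- β = 1 : q*s = k - 1 so k = q*s + 1 ≥ s + 1 > d + 1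
      have hβ1 : β = 1 := by omega
      rw [hβ1] at hqs
      simp at hqs
      have h1 : (1:ℤ) * s ≤ (q:ℤ) * s := mul_le_mul_of_nonneg_right hq1Z (le_of_lt hs0)
      have : (d:ℤ) + 1 < k := by linarith
      exact_mod_cast this
  have hdk1Z : (d:ℤ) + 1 < k := by exact_mod_cast hdk1
  -- the core: no small residue works
  have hcore := subA hd hk hsd hP hβ hqs htpZ
  -- q < k
  have hqk : q < k := by
    by_contra hcon
    push_neg at hcon   -- k ≤ q
    set r : ℕ := q - k with hrdef
    have hrZ : (r:ℤ) = (q:ℤ) - k := by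
      rw [hrdef]; push_cast [Nat.cast_sub hcon]; ring
    have hrs : (r:ℤ) * s = ((β:ℤ) - s) * k - 1 := by
      rw [hrZ]
      have e : ((q:ℤ) - k) * s = q * s - k * s := by ring
      have e2 : ((β:ℤ) - s) * k = β * k - s * k := by ring
      linarith [mul_comm (k:ℤ) (s:ℤ)]
    rcases Nat.eq_zero_or_pos r with hr0 | hr1
    · rw [hr0] at hrs
      simp at hrs
      have hdv : (k:ℤ) ∣ 1 := ⟨(β:ℤ) - s, by linarith⟩
      have := Int.le_of_dvd one_pos hdv
      linarith
    · have hr1Z : (1:ℤ) ≤ r := by exact_mod_cast hr1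
      have hβs : (s:ℤ) + 1 ≤ β := by
        by_contra hcon2
        push_neg at hcon2
        have h0 : (β:ℤ) - s ≤ 0 := by linarith
        have hpp : ((β:ℤ) - s) * k ≤ 0 :=
          mul_nonpos_iff.mpr (Or.inr ⟨h0, le_of_lt hk0⟩)
        have h2 : (1:ℤ) * (s:ℤ) ≤ (r:ℤ) * s := mul_le_mul_of_nonneg_right hr1Z (le_of_lt hs0)
        linarith
      have hβsN : s ≤ β := by
        have : (s:ℤ) ≤ β := by linarith
        exact_mod_cast this
      set j : ℕ := β - s with hjdef
      have hjZ : (j:ℤ) = (β:ℤ) - s := by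
        rw [hjdef]; push_cast [Nat.cast_sub hβsN]; ring
      exact hcore r j (-1) hr1 (by omega) (by norm_num)
        (by rw [abs_neg, abs_one]; exact_mod_cast hd)
        (by rw [hjZ]; linarith)
  -- stilde = q
  have hstq : stilde s k d = q := by
    have hqmem : q ∈ {r : ℕ | r < k ∧ ∃ ℓ : ℤ, ℓ ≠ 0 ∧ -(d : ℤ) ≤ ℓ ∧ ℓ ≤ (d : ℤ) ∧
        (r : ℤ) * ((s : ℤ) % (k : ℤ)) ≡ ℓ [ZMOD (k : ℤ)]} := by
      refine ⟨hqk, -1, by norm_num, by linarith, by linarith, ?_⟩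
      have h1 := mod_transfer s k (q:ℤ)
      have h2 : (q:ℤ) * s ≡ -1 [ZMOD (k:ℤ)] :=
        (Int.modEq_iff_dvd.mpr ⟨-(β:ℤ), by linarith [mul_comm (k:ℤ) (-(β:ℤ)), mul_comm (β:ℤ) (k:ℤ)]⟩ :
          ((q:ℤ) * s : ℤ) ≡ -1 [ZMOD (k:ℤ)])
      exact h1.trans h2
    have hexcl : ∀ r ∈ {r : ℕ | r < k ∧ ∃ ℓ : ℤ, ℓ ≠ 0 ∧ -(d : ℤ) ≤ ℓ ∧ ℓ ≤ (d : ℤ) ∧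
        (r : ℤ) * ((s : ℤ) % (k : ℤ)) ≡ ℓ [ZMOD (k : ℤ)]}, ¬ (r < q) := by
      rintro r ⟨hrk, ℓ, hl0, hld1, hld2, hmod⟩ hrq
      have hldabs : |ℓ| ≤ (d:ℤ) := abs_le.mpr ⟨by linarith, hld2⟩
      have hmod2 : (r:ℤ) * s ≡ ℓ [ZMOD (k:ℤ)] := (mod_transfer s k r).symm.trans hmod
      have hdvd : (k:ℤ) ∣ ((r:ℤ) * s - ℓ) := (hmod2.symm).dvd
      rcases Nat.eq_zero_or_pos r with hr0 | hr1
      · subst hr0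
        simp at hdvd
        have h1 : (k:ℤ) ∣ |ℓ| := (dvd_abs _ _).mpr hdvd
        have h2 : (k:ℤ) ≤ |ℓ| := Int.le_of_dvd (abs_pos.mpr hl0) h1
        linarith
      · obtain ⟨t, ht⟩ := hdvd
        have hr1Z : (1:ℤ) ≤ r := by exact_mod_cast hr1
        have ht0 : 0 < t := by
          rcases le_or_gt t 0 with h | h
          · exfalso
            have h1 : (k:ℤ) * t ≤ 0 := mul_nonpos_of_nonneg_of_nonpos (le_of_lt hk0) h
            have h2 : (1:ℤ) * (s:ℤ) ≤ (r:ℤ) * s := mul_le_mul_of_nonneg_right hr1Z (le_of_lt hs0)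
            linarith
          · exact h
        set j : ℕ := t.toNat with hjdef
        have hjZ : (j:ℤ) = t := Int.toNat_of_nonneg (le_of_lt ht0)
        exact hcore r j ℓ hr1 hrq hl0 hldabs (by rw [hjZ]; linarith [mul_comm (k:ℤ) t])
    have h1 : stilde s k d ≤ q := Nat.sInf_le hqmem
    have h2 := Nat.sInf_mem (⟨q, hqmem⟩ : {r : ℕ | r < k ∧ ∃ ℓ : ℤ, ℓ ≠ 0 ∧ -(d : ℤ) ≤ ℓ ∧ ℓ ≤ (d : ℤ) ∧
        (r : ℤ) * ((s : ℤ) % (k : ℤ)) ≡ ℓ [ZMOD (k : ℤ)]}.Nonempty)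
    have h3 := hexcl _ h2
    unfold stilde
    unfold stilde at h1
    omega
  -- (s % k * q) % k = k - 1
  have hM : (s % k * stilde s k d) % k = k - 1 := by
    rw [hstq]
    have h1 : (s % k * q) % k = (s * q) % k := (Nat.mod_modEq s k).mul_right q
    have h2 : s * q = (β - 1) * k + (k - 1) := by
      have : ((s * q : ℕ) : ℤ) = (((β - 1) * k + (k - 1) : ℕ) : ℤ) := by
        push_cast [Nat.cast_sub (by omega : 1 ≤ β), Nat.cast_sub (by omega : 1 ≤ k)]
        have e : ((β:ℤ) - 1) * k = β * k - k := by ring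
        linarith [hqs, mul_comm (s:ℤ) (q:ℤ), e]
      exact_mod_cast this
    rw [h1, h2, Nat.add_comm, Nat.add_mul_mod_self_right]
    exact Nat.mod_eq_of_lt (by omega)
  rw [hM]
  rintro (⟨h1, h2⟩ | ⟨h1, h2⟩ | h3) <;> omega


/-- Case B: `t' = m*s`, `t' - 1 = β*(s+k)`. Then `stilde = q` with `(s%k*q)%k = 1`. -/
lemma caseB {s k d : ℕ} (hs : 2 ≤ s) (hk : 1 < k) (hd : 0 < d)
    (hP : (Pset s k d).Nonempty) {m β : ℕ} (hm : 0 < m) (hβ : 0 < β)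
    (hts : tprime s k d = m * s) (htk : tprime s k d = β * (s + k) + 1) :
    ¬ ((1 < (s % k * stilde s k d) % k ∧ (s % k * stilde s k d) % k ≤ d) ∨
      (d < (s % k * stilde s k d) % k ∧ (s % k * stilde s k d) % k < k - 1) ∨ k ≤ d) := by
  have hs0 : (0:ℤ) < s := by exact_mod_cast (by omega : 0 < s)
  have hk0 : (0:ℤ) < k := by exact_mod_cast (by omega : 0 < k)
  have hk2 : (2:ℤ) ≤ k := by exact_mod_cast hk
  have hβZ : (1:ℤ) ≤ β := by exact_mod_cast hβ
  have hmZ : (1:ℤ) ≤ m := by exact_mod_cast hm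
  have heqZ : (m:ℤ) * s = (β:ℤ) * (s + k) + 1 := by
    have : ((m * s : ℕ) : ℤ) = ((β * (s + k) + 1 : ℕ) : ℤ) := by
      rw [← hts, ← htk]
    push_cast at this; linarith
  have hβk : (β:ℤ) * (s + k) = β * s + β * k := by ring
  have hβm : β < m := by
    by_contra hcon
    push_neg at hcon
    have h1 : (m:ℤ) ≤ β := by exact_mod_cast hcon
    have h2 : (m:ℤ) * s ≤ (β:ℤ) * s :=
      mul_le_mul_of_nonneg_right h1 (le_of_lt hs0)
    have h3 : (1:ℤ) * k ≤ (β:ℤ) * k := mul_le_mul_of_nonneg_right hβZ (le_of_lt hk0)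
    linarith
  have hβm' : β ≤ m := le_of_lt hβm
  set q : ℕ := m - β with hqdef
  have hqZ : (q:ℤ) = (m:ℤ) - β := by
    rw [hqdef]; push_cast [Nat.cast_sub hβm']; ring
  have hqs : (q:ℤ) * s = (β:ℤ) * k + 1 := by
    rw [hqZ]
    have e : ((m:ℤ) - β) * s = m * s - β * s := by ring
    linarith
  have hq1 : 1 ≤ q := by omega
  have hq1Z : (1:ℤ) ≤ q := by exact_mod_cast hq1
  have hm2 : 2 ≤ m := by omega
  -- d < s
  have hsd : d < s := by
    have h1 : s < tprime s k d := by
      rw [hts]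
      have : 2 * s ≤ m * s := Nat.mul_le_mul_right _ hm2
      omega
    have := spread hP (⟨1, 0, by ring⟩ : IsRep s k s) (⟨0, 0, by ring⟩ : IsRep s k 0) (by omega) h1
    omega
  have hsdZ : (d:ℤ) < s := by exact_mod_cast hsd
  have hdZ : (1:ℤ) ≤ d := by exact_mod_cast hd
  -- d < k
  have hdk : d < k := by
    have h1 : s + k < tprime s k d := by
      rw [htk]
      have : 1 * (s + k) ≤ β * (s + k) := Nat.mul_le_mul_right _ hβ
      omega
    have := spread hP (⟨0, 1, by ring⟩ : IsRep s k (s + k)) (⟨1, 0, by ring⟩ : IsRep s k s)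
      (by omega) h1
    omega
  -- t' in ℤ-form
  have htpZ : (tprime s k d : ℤ) = ((q : ℤ) + β) * s := by
    rw [hts]; push_cast
    have e : ((q:ℤ) + β) * s = q * s + β * s := by ring
    rw [e, hqZ]
    ring
  have hcore := subB hd hk hsd hP hβ hqs htpZ
  -- q < k
  have hqk : q < k := by
    by_contra hcon
    push_neg at hcon
    set r : ℕ := q - k with hrdef
    have hrZ : (r:ℤ) = (q:ℤ) - k := by
      rw [hrdef]; push_cast [Nat.cast_sub hcon]; ring
    have hrs : (r:ℤ) * s = ((β:ℤ) - s) * k + 1 := by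
      rw [hrZ]
      have e : ((q:ℤ) - k) * s = q * s - k * s := by ring
      have e2 : ((β:ℤ) - s) * k = β * k - s * k := by ring
      linarith [mul_comm (k:ℤ) (s:ℤ)]
    rcases Nat.eq_zero_or_pos r with hr0 | hr1
    · rw [hr0] at hrs
      simp at hrs
      have hdv : (k:ℤ) ∣ 1 := ⟨(s:ℤ) - β, by linarith⟩
      have := Int.le_of_dvd one_pos hdv
      linarith
    · have hr1Z : (1:ℤ) ≤ r := by exact_mod_cast hr1
      have hβs : (s:ℤ) + 1 ≤ β := by
        by_contra hcon2
        push_neg at hcon2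
        have h0 : (β:ℤ) - s ≤ 0 := by linarith
        have hpp : ((β:ℤ) - s) * k ≤ 0 :=
          mul_nonpos_iff.mpr (Or.inr ⟨h0, le_of_lt hk0⟩)
        have h2 : (1:ℤ) * (s:ℤ) ≤ (r:ℤ) * s := mul_le_mul_of_nonneg_right hr1Z (le_of_lt hs0)
        linarith
      have hβsN : s ≤ β := by
        have : (s:ℤ) ≤ β := by linarith
        exact_mod_cast this
      set j : ℕ := β - s with hjdef
      have hjZ : (j:ℤ) = (β:ℤ) - s := by
        rw [hjdef]; push_cast [Nat.cast_sub hβsN]; ring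
      exact hcore r j 1 hr1 (by omega) (by norm_num)
        (by rw [abs_one]; exact_mod_cast hd)
        (by rw [hjZ]; linarith)
  -- stilde = q
  have hstq : stilde s k d = q := by
    have hqmem : q ∈ {r : ℕ | r < k ∧ ∃ ℓ : ℤ, ℓ ≠ 0 ∧ -(d : ℤ) ≤ ℓ ∧ ℓ ≤ (d : ℤ) ∧
        (r : ℤ) * ((s : ℤ) % (k : ℤ)) ≡ ℓ [ZMOD (k : ℤ)]} := by
      refine ⟨hqk, 1, by norm_num, by linarith, by exact_mod_cast hd, ?_⟩
      have h1 := mod_transfer s k (q:ℤ)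
      have h2 : (q:ℤ) * s ≡ 1 [ZMOD (k:ℤ)] :=
        (Int.modEq_iff_dvd.mpr ⟨-(β:ℤ), by linarith [mul_comm (k:ℤ) (-(β:ℤ)), mul_comm (β:ℤ) (k:ℤ)]⟩ :
          ((q:ℤ) * s : ℤ) ≡ 1 [ZMOD (k:ℤ)])
      exact h1.trans h2
    have hexcl : ∀ r ∈ {r : ℕ | r < k ∧ ∃ ℓ : ℤ, ℓ ≠ 0 ∧ -(d : ℤ) ≤ ℓ ∧ ℓ ≤ (d : ℤ) ∧
        (r : ℤ) * ((s : ℤ) % (k : ℤ)) ≡ ℓ [ZMOD (k : ℤ)]}, ¬ (r < q) := by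
      rintro r ⟨hrk, ℓ, hl0, hld1, hld2, hmod⟩ hrq
      have hldabs : |ℓ| ≤ (d:ℤ) := abs_le.mpr ⟨by linarith, hld2⟩
      have hmod2 : (r:ℤ) * s ≡ ℓ [ZMOD (k:ℤ)] := (mod_transfer s k r).symm.trans hmod
      have hdvd : (k:ℤ) ∣ ((r:ℤ) * s - ℓ) := (hmod2.symm).dvd
      rcases Nat.eq_zero_or_pos r with hr0 | hr1
      · subst hr0
        simp at hdvd
        have h1 : (k:ℤ) ∣ |ℓ| := (dvd_abs _ _).mpr hdvd
        have h2 : (k:ℤ) ≤ |ℓ| := Int.le_of_dvd (abs_pos.mpr hl0) h1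
        linarith
      · obtain ⟨t, ht⟩ := hdvd
        have hr1Z : (1:ℤ) ≤ r := by exact_mod_cast hr1
        have ht0 : 0 < t := by
          rcases le_or_gt t 0 with h | h
          · exfalso
            have h1 : (k:ℤ) * t ≤ 0 := mul_nonpos_of_nonneg_of_nonpos (le_of_lt hk0) h
            have h2 : (1:ℤ) * (s:ℤ) ≤ (r:ℤ) * s := mul_le_mul_of_nonneg_right hr1Z (le_of_lt hs0)
            linarith
          · exact h
        set j : ℕ := t.toNat with hjdef
        have hjZ : (j:ℤ) = t := Int.toNat_of_nonneg (le_of_lt ht0)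
        exact hcore r j ℓ hr1 hrq hl0 hldabs (by rw [hjZ]; linarith [mul_comm (k:ℤ) t])
    have h1 : stilde s k d ≤ q := Nat.sInf_le hqmem
    have h2 := Nat.sInf_mem (⟨q, hqmem⟩ : {r : ℕ | r < k ∧ ∃ ℓ : ℤ, ℓ ≠ 0 ∧ -(d : ℤ) ≤ ℓ ∧ ℓ ≤ (d : ℤ) ∧
        (r : ℤ) * ((s : ℤ) % (k : ℤ)) ≡ ℓ [ZMOD (k : ℤ)]}.Nonempty)
    have h3 := hexcl _ h2
    unfold stilde
    unfold stilde at h1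
    omega
  -- (s % k * q) % k = 1
  have hM : (s % k * stilde s k d) % k = 1 := by
    rw [hstq]
    have h1 : (s % k * q) % k = (s * q) % k := (Nat.mod_modEq s k).mul_right q
    have h2 : s * q = 1 + β * k := by
      have : ((s * q : ℕ) : ℤ) = ((1 + β * k : ℕ) : ℤ) := by
        push_cast
        linarith [hqs, mul_comm (s:ℤ) (q:ℤ)]
      exact_mod_cast this
    rw [h1, h2, Nat.add_mul_mod_self_right]
    exact Nat.mod_eq_of_lt (by omega)
  rw [hM]
  rintro (⟨h1, h2⟩ | ⟨h1, h2⟩ | h3) <;> omega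


/-- Forced subtraction closure. -/
lemma reach {S K D : ℕ} {B : Finset ℕ} (h : IsCoreBeta S K D B) :
    ∀ (a b x : ℕ), x ∈ B → a * S + b * (S + K) ≤ x → x - (a * S + b * (S + K)) ∈ B := by
  have hK : ∀ (b x : ℕ), x ∈ B → b * (S + K) ≤ x → x - b * (S + K) ∈ B := by
    intro b
    induction b with
    | zero => intro x hx _; simpa using hx
    | succ n ih =>
      intro x hx hle
      have e : (n + 1) * (S + K) = n * (S + K) + (S + K) := by ring
      rw [e] at hle
      have h1 : S + K ≤ x := by
        have : (0:ℕ) ≤ n * (S + K) := Nat.zero_le _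
        linarith
      have h2 := h.2.2.2.1 x hx h1
      have h3 : n * (S + K) ≤ x - (S + K) := Nat.le_sub_of_add_le hle
      have h4 := ih _ h2 h3
      have e2 : x - (S + K) - n * (S + K) = x - (n + 1) * (S + K) := by
        rw [e]
        omega
      rwa [e2] at h4
  have hS : ∀ (a x : ℕ), x ∈ B → a * S ≤ x → x - a * S ∈ B := by
    intro a
    induction a with
    | zero => intro x hx _; simpa using hx
    | succ n ih =>
      intro x hx hle
      have e : (n + 1) * S = n * S + S := by ring
      rw [e] at hle
      have h1 : S ≤ x := by
        have : (0:ℕ) ≤ n * S := Nat.zero_le _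
        linarith
      have h2 := h.2.2.1 x hx h1
      have h3 : n * S ≤ x - S := Nat.le_sub_of_add_le (by linarith)
      have h4 := ih _ h2 h3
      have e2 : x - S - n * S = x - (n + 1) * S := by rw [e]; omega
      rwa [e2] at h4
  intro a b x hx hle
  have hb : b * (S + K) ≤ x := by
    have : (0:ℕ) ≤ a * S := Nat.zero_le _
    linarith
  have h1 := hK b x hx hb
  have ha : a * S ≤ x - b * (S + K) := Nat.le_sub_of_add_le (by linarith)
  have h2 := hS a _ h1 ha
  have e : x - b * (S + K) - a * S = x - (a * S + b * (S + K)) := by omega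
  rwa [e] at h2

/-- Scaling a β-set gives a scaled β-set: membership direction. -/
lemma scale_mem {s k d b c H : ℕ} (hb : 2 ≤ b) (hc : c < b)
    (hmem : H ∈ HookLengths s k d) :
    b * (H + 1) - 1 ∈ HookLengths (b * s) (b * k) (b * d + c) := by
  obtain ⟨B, ⟨hne, hpos, hcs, hck, hdist⟩, hHB⟩ := hmem
  have hb1 : 1 ≤ b := by omega
  refine ⟨B.image (fun x => b * x + (b - 1)), ⟨?_, ?_, ?_, ?_, ?_⟩, ?_⟩
  · exact hne.image _
  · intro y hy
    obtain ⟨x, _, rfl⟩ := Finset.mem_image.mp hy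
    have : 0 < b - 1 := by omega
    omega
  · intro y hy hsy
    obtain ⟨x, hx, rfl⟩ := Finset.mem_image.mp hy
    have hxs : s ≤ x := by
      by_contra hcon
      push_neg at hcon
      have h1 : x + 1 ≤ s := hcon
      have h2 : b * (x + 1) ≤ b * s := Nat.mul_le_mul_left _ h1
      have e : b * (x + 1) = b * x + b := by ring
      omega
    have hx2 := hcs x hx hxs
    refine Finset.mem_image.mpr ⟨x - s, hx2, ?_⟩
    have e : b * (x - s) + b * s = b * x := by
      rw [← Nat.mul_add, Nat.sub_add_cancel hxs]
    omega
  · intro y hy hsy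
    obtain ⟨x, hx, rfl⟩ := Finset.mem_image.mp hy
    have heq : b * s + b * k = b * (s + k) := by ring
    rw [heq] at hsy ⊢
    have hxs : s + k ≤ x := by
      by_contra hcon
      push_neg at hcon
      have h1 : x + 1 ≤ s + k := hcon
      have h2 : b * (x + 1) ≤ b * (s + k) := Nat.mul_le_mul_left _ h1
      have e : b * (x + 1) = b * x + b := by ring
      omega
    have hx2 := hck x hx hxs
    refine Finset.mem_image.mpr ⟨x - (s + k), hx2, ?_⟩
    have e : b * (x - (s + k)) + b * (s + k) = b * x := by
      rw [← Nat.mul_add, Nat.sub_add_cancel hxs]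
    omega
  · intro y hy y' hy' hne'
    obtain ⟨x, hx, rfl⟩ := Finset.mem_image.mp hy
    obtain ⟨x', hx', rfl⟩ := Finset.mem_image.mp hy'
    have hxx : x ≠ x' := by
      intro hq; exact hne' (by rw [hq])
    have h1 := hdist x hx x' hx' hxx
    have h2 : (d:ℤ) + 1 ≤ |(x:ℤ) - x'| := by omega
    have e : ((b * x + (b - 1) : ℕ) : ℤ) - ((b * x' + (b - 1) : ℕ) : ℤ)
        = (b:ℤ) * ((x:ℤ) - x') := by
      push_cast [Nat.cast_sub hb1]
      ring
    rw [e, abs_mul, abs_of_nonneg (by positivity : (0:ℤ) ≤ (b:ℤ))]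
    have h3 : (b:ℤ) * ((d:ℤ) + 1) ≤ (b:ℤ) * |(x:ℤ) - x'| :=
      mul_le_mul_of_nonneg_left h2 (by positivity)
    have hcz : (c:ℤ) < b := by exact_mod_cast hc
    push_cast
    linarith
  · refine Finset.mem_image.mpr ⟨H, hHB, ?_⟩
    have e : b * (H + 1) = b * H + b := by ring
    omega

/-- Upper bound: any scaled hook length is `< b * tprime`. -/
lemma upper {s k d b c n : ℕ} (hb : 2 ≤ b) (hP : (Pset s k d).Nonempty)
    (hn : n ∈ HookLengths (b * s) (b * k) (b * d + c)) (hc : c < b) :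
    n < b * tprime s k d := by
  obtain ⟨B, hB, hnB⟩ := hn
  by_contra hcon
  push_neg at hcon
  have htP : tprime s k d ∈ Pset s k d := Nat.sInf_mem hP
  obtain ⟨hrepT, w, hw, hwt, hwd⟩ := htP
  have htw : tprime s k d ≤ w + d := hwd
  obtain ⟨a1, b1, ht⟩ := hrepT
  obtain ⟨a2, b2, hwr⟩ := hw
  have e1 : a1 * (b * s) + b1 * (b * s + b * k) = b * tprime s k d := by
    rw [ht]; ring
  have e2 : a2 * (b * s) + b2 * (b * s + b * k) = b * w := by
    rw [hwr]; ring
  have hbw_le : b * w ≤ b * tprime s k d := Nat.mul_le_mul_left _ (le_of_lt hwt)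
  have hbw_lt : b * w < b * tprime s k d := by
    have h1 : b * (w + 1) ≤ b * tprime s k d := Nat.mul_le_mul_left _ hwt
    have e : b * (w + 1) = b * w + b := by ring
    omega
  have m1 : n - b * tprime s k d ∈ B := by
    have := reach hB a1 b1 n hnB (by rw [e1]; exact hcon)
    rwa [e1] at this
  have m2 : n - b * w ∈ B := by
    have := reach hB a2 b2 n hnB (by rw [e2]; omega)
    rwa [e2] at this
  rcases eq_or_lt_of_le hcon with heq | hlt
  · have h0 : n - b * tprime s k d = 0 := by omega
    rw [h0] at m1
    exact absurd (hB.2.1 0 m1) (lt_irrefl 0)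
  · have hne : n - b * tprime s k d ≠ n - b * w := by omega
    have hd2 := hB.2.2.2.2 _ m1 _ m2 hne
    have hsub : b * tprime s k d - b * w ≤ b * d := by
      have h1 : b * tprime s k d ≤ b * (w + d) := Nat.mul_le_mul_left _ htw
      have e : b * (w + d) = b * w + b * d := by ring
      omega
    have hcast : ((n - b * tprime s k d : ℕ) : ℤ) - ((n - b * w : ℕ) : ℤ)
        = -(((b * tprime s k d : ℕ) : ℤ) - ((b * w : ℕ) : ℤ)) := by
      push_cast [Nat.cast_sub (le_of_lt hlt), Nat.cast_sub (le_trans hbw_le (le_of_lt hlt))]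
      ring
    rw [hcast, abs_neg] at hd2
    have hnn : (0:ℤ) ≤ ((b * tprime s k d : ℕ) : ℤ) - ((b * w : ℕ) : ℤ) := by
      have : ((b * w : ℕ) : ℤ) ≤ ((b * tprime s k d : ℕ) : ℤ) := by exact_mod_cast hbw_le
      linarith
    rw [abs_of_nonneg hnn] at hd2
    have h5 : ((b * tprime s k d : ℕ) : ℤ) - ((b * w : ℕ) : ℤ) ≤ ((b * d : ℕ) : ℤ) := by
      have := hsub
      omega
    have h6 : ((b * d + c : ℕ) : ℤ) < ((b * d : ℕ) : ℤ) := lt_of_lt_of_le hd2 h5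
    have : b * d + c < b * d := by exact_mod_cast h6
    omega

/-- `tprime - 1` is itself an (s,k,d)-hook length, given it is not representable. -/
lemma claim2 {s k d : ℕ} (hs : 2 ≤ s) (hd : 0 < d) (hP : (Pset s k d).Nonempty)
    (hnr : ¬ IsRep s k (tprime s k d - 1)) : tprime s k d - 1 ∈ HookLengths s k d := by
  classical
  have htP : tprime s k d ∈ Pset s k d := Nat.sInf_mem hP
  obtain ⟨hrepT, w0, hw0, hwt0, hwd0⟩ := htP
  have ht1 : 1 ≤ tprime s k d := by omega
  set t := tprime s k d with htdef
  set u := t - 1 with hudef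
  have hut : u + 1 = t := by omega
  set Bf : Finset ℕ :=
    ((Finset.range t).filter (fun v => IsRep s k v)).image (fun v => u - v) with hBf
  have hmem : ∀ y, y ∈ Bf ↔ ∃ v, v < t ∧ IsRep s k v ∧ u - v = y := by
    intro y
    simp [hBf, Finset.mem_image, Finset.mem_filter, Finset.mem_range]
    constructor
    · rintro ⟨v, ⟨hv1, hv2⟩, hv3⟩; exact ⟨v, hv1, hv2, hv3⟩
    · rintro ⟨v, hv1, hv2, hv3⟩; exact ⟨v, ⟨hv1, hv2⟩, hv3⟩
  have hvu : ∀ v, v < t → IsRep s k v → v < u := by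
    intro v hv1 hv2
    have : v ≠ u := fun h => hnr (h ▸ hv2)
    omega
  refine ⟨Bf, ⟨?_, ?_, ?_, ?_, ?_⟩, ?_⟩
  · exact ⟨u, (hmem u).mpr ⟨0, by omega, ⟨0, 0, by ring⟩, by omega⟩⟩
  · intro y hy
    obtain ⟨v, hv1, hv2, hv3⟩ := (hmem y).mp hy
    have := hvu v hv1 hv2
    omega
  · intro y hy hsy
    obtain ⟨v, hv1, hv2, hv3⟩ := (hmem y).mp hy
    have hvltu := hvu v hv1 hv2
    refine (hmem (y - s)).mpr ⟨v + s, by omega, ?_, by omega⟩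
    obtain ⟨a, b, rfl⟩ := hv2
    exact ⟨a + 1, b, by ring⟩
  · intro y hy hsy
    obtain ⟨v, hv1, hv2, hv3⟩ := (hmem y).mp hy
    have hvltu := hvu v hv1 hv2
    refine (hmem (y - (s + k))).mpr ⟨v + (s + k), by omega, ?_, by omega⟩
    obtain ⟨a, b, rfl⟩ := hv2
    exact ⟨a, b + 1, by ring⟩
  · intro y hy y' hy' hne'
    obtain ⟨v, hv1, hv2, hv3⟩ := (hmem y).mp hy
    obtain ⟨v', hv1', hv2', hv3'⟩ := (hmem y').mp hy'
    have hvltu := hvu v hv1 hv2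
    have hvltu' := hvu v' hv1' hv2'
    have hvv : v ≠ v' := by omega
    rcases lt_or_gt_of_ne hvv with h | h
    · have := spread hP hv2' hv2 h hv1'
      have hy2 : (y:ℤ) - y' = (v':ℤ) - v := by omega
      rw [hy2, abs_of_pos (by omega : (0:ℤ) < (v':ℤ) - v)]
      omega
    · have := spread hP hv2 hv2' h hv1
      have hy2 : (y:ℤ) - y' = -((v:ℤ) - v') := by omega
      rw [hy2, abs_neg, abs_of_pos (by omega : (0:ℤ) < (v:ℤ) - v')]
      omega
  · exact (hmem u).mpr ⟨0, by omega, ⟨0, 0, by ring⟩, by omega⟩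

/-- The key arithmetic fact: under `hcase`, `tprime - 1` is not representable. -/
lemma key {s k d : ℕ} (hs : 2 ≤ s) (hk : 1 < k) (hd : 0 < d)
    (hP : (Pset s k d).Nonempty)
    (hcase : (1 < (s % k * stilde s k d) % k ∧ (s % k * stilde s k d) % k ≤ d) ∨
      (d < (s % k * stilde s k d) % k ∧ (s % k * stilde s k d) % k < k - 1) ∨ k ≤ d) :
    ¬ IsRep s k (tprime s k d - 1) := by
  intro hu
  have htP : tprime s k d ∈ Pset s k d := Nat.sInf_mem hP
  obtain ⟨hrepT, w0, hw0, hwt0, hwd0⟩ := htP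
  set t := tprime s k d with htdef
  have ht1 : 1 ≤ t := by omega
  set u := t - 1 with hudef
  have hut : u + 1 = t := by omega
  have hts2 : s ≤ t := rep_ge hrepT (by omega)
  have hu1 : 1 ≤ u := by
    rcases Nat.eq_zero_or_pos u with h0 | h
    · exfalso
      have : t = 1 := by omega
      omega
    · exact h
  obtain ⟨a, b0, hua⟩ := hu
  obtain ⟨a', b', hta⟩ := hrepT
  have hC1 : a = 0 ∨ a' = 0 := by
    by_contra hcon
    push_neg at hcon
    obtain ⟨ha, ha'⟩ := hcon
    obtain ⟨a0, rfl⟩ : ∃ a0, a = a0 + 1 := ⟨a - 1, by omega⟩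
    obtain ⟨a0', rfl⟩ : ∃ a0', a' = a0' + 1 := ⟨a' - 1, by omega⟩
    have e1 : u = (a0 * s + b0 * (s + k)) + s := by rw [hua]; ring
    have e2 : t = (a0' * s + b' * (s + k)) + s := by rw [hta]; ring
    have hv : a0 * s + b0 * (s + k) + 1 = a0' * s + b' * (s + k) := by omega
    have hwv : a0 * s + b0 * (s + k) < a0' * s + b' * (s + k) := by omega
    have hvt : a0' * s + b' * (s + k) < t := by omega
    have := spread hP (⟨a0', b', rfl⟩ : IsRep s k (a0' * s + b' * (s + k)))
      (⟨a0, b0, rfl⟩ : IsRep s k (a0 * s + b0 * (s + k))) hwv hvt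
    omega
  have hC2 : b0 = 0 ∨ b' = 0 := by
    by_contra hcon
    push_neg at hcon
    obtain ⟨hb, hb'⟩ := hcon
    obtain ⟨c0, rfl⟩ : ∃ c0, b0 = c0 + 1 := ⟨b0 - 1, by omega⟩
    obtain ⟨c0', rfl⟩ : ∃ c0', b' = c0' + 1 := ⟨b' - 1, by omega⟩
    have e1 : u = (a * s + c0 * (s + k)) + (s + k) := by rw [hua]; ring
    have e2 : t = (a' * s + c0' * (s + k)) + (s + k) := by rw [hta]; ring
    have hwv : a * s + c0 * (s + k) < a' * s + c0' * (s + k) := by omega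
    have hvt : a' * s + c0' * (s + k) < t := by omega
    have := spread hP (⟨a', c0', rfl⟩ : IsRep s k (a' * s + c0' * (s + k)))
      (⟨a, c0, rfl⟩ : IsRep s k (a * s + c0 * (s + k))) hwv hvt
    omega
  rcases hC1 with hA | hA' <;> rcases hC2 with hB | hB'
  · -- a = 0, b0 = 0 : u = 0
    exfalso
    rw [hA, hB] at hua
    simp at hua
    omega
  · -- a = 0, b' = 0 : u = b0*(s+k), t = a'*s : case B
    rw [hA] at hua
    simp at hua
    rw [hB'] at hta
    simp at hta
    have hm : 0 < a' := by
      rcases Nat.eq_zero_or_pos a' with h0 | h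
      · exfalso; rw [h0] at hta; simp at hta; omega
      · exact h
    have hβ : 0 < b0 := by
      rcases Nat.eq_zero_or_pos b0 with h0 | h
      · exfalso; rw [h0] at hua; simp at hua; omega
      · exact h
    exact caseB hs hk hd hP hm hβ hta (by omega) hcase
  · -- a' = 0, b0 = 0 : u = a*s, t = b'*(s+k) : case A
    rw [hB] at hua
    simp at hua
    rw [hA'] at hta
    simp at hta
    have hm : 0 < a := by
      rcases Nat.eq_zero_or_pos a with h0 | h
      · exfalso; rw [h0] at hua; simp at hua; omega
      · exact h
    have hβ : 0 < b' := by
      rcases Nat.eq_zero_or_pos b' with h0 | h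
      · exfalso; rw [h0] at hta; simp at hta; omega
      · exact h
    exact caseA hs hk hd hP hm hβ (by omega) hta hcase
  · -- a' = 0, b' = 0 : t = 0
    exfalso
    rw [hA', hB'] at hta
    simp at hta
    omega


end MaxHookIV

theorem max_hook_noncoprime_IV (s k d b c : ℕ) (hs : 2 ≤ s) (hk : 1 < k) (hd : 0 < d)
    (hcop : Nat.Coprime s k) (hb : 2 ≤ b) (hc : c < b)
    (hcase : (1 < (s % k * stilde s k d) % k ∧ (s % k * stilde s k d) % k ≤ d) ∨
      (d < (s % k * stilde s k d) % k ∧ (s % k * stilde s k d) % k < k - 1) ∨ k ≤ d)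
    (H : ℕ) (hH : IsGreatest (HookLengths s k d) H) :
    IsGreatest (HookLengths (b * s) (b * k) (b * d + c)) (b * (H + 1) - 1) := by
  have hP : (MaxHookIV.Pset s k d).Nonempty :=
    MaxHookIV.Pset_nonempty d hs (by omega) hcop hd
  constructor
  · exact MaxHookIV.scale_mem hb hc hH.1
  · intro n hn
    have h1 : n < b * MaxHookIV.tprime s k d := MaxHookIV.upper hb hP hn hc
    have hkey : ¬ MaxHookIV.IsRep s k (MaxHookIV.tprime s k d - 1) :=
      MaxHookIV.key hs hk hd hP hcase
    have h2 : MaxHookIV.tprime s k d - 1 ∈ HookLengths s k d :=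
      MaxHookIV.claim2 hs hd hP hkey
    have h3 : MaxHookIV.tprime s k d - 1 ≤ H := hH.2 h2
    have htP : MaxHookIV.tprime s k d ∈ MaxHookIV.Pset s k d := Nat.sInf_mem hP
    obtain ⟨_, w0, _, hwt0, _⟩ := htP
    have ht1 : 1 ≤ MaxHookIV.tprime s k d := by omega
    have h4 : b * MaxHookIV.tprime s k d ≤ b * (H + 1) :=
      Nat.mul_le_mul_left _ (by omega)
    exact Nat.le_pred_of_lt (lt_of_lt_of_le h1 h4)
end

section
/- Let s, k, d be positive integers with s and k coprime and s ≥ 2, and let b ≥ 2 and 0 ≤ c < b be integers. Then H_{bd+c}(bs, bk) = H_{bd}(bs, bk). -/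
/-- Subtracting a multiple of `b` preserves the residue mod `b`. -/
lemma sub_mul_mod' (x b m : ℕ) (h : b * m ≤ x) : (x - b * m) % b = x % b := by
  conv_rhs => rw [← Nat.sub_add_cancel h]
  rw [Nat.add_mul_mod_self_left]

lemma hook_sets_eq (s k d b c : ℕ) (hc : c < b) :
    HookLengths (b * s) (b * k) (b * d + c) = HookLengths (b * s) (b * k) (b * d) := by
  ext n
  constructor
  · rintro ⟨B, ⟨hne, hpos, h1, h2, hdist⟩, hn⟩
    refine ⟨B, ⟨hne, hpos, h1, h2, fun x hx y hy hxy => ?_⟩, hn⟩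
    have := hdist x hx y hy hxy
    have : ((b * d : ℕ) : ℤ) ≤ ((b * d + c : ℕ) : ℤ) := by exact_mod_cast Nat.le_add_right _ _
    omega
  · rintro ⟨B, ⟨hne, hpos, h1, h2, hdist⟩, hn⟩
    refine ⟨B.filter (fun x => x % b = n % b), ⟨⟨n, ?_⟩, ?_, ?_, ?_, ?_⟩, ?_⟩
    · simp [hn]
    · intro x hx
      exact hpos x (Finset.mem_filter.mp hx).1
    · intro x hx hle
      obtain ⟨hxB, hxr⟩ := Finset.mem_filter.mp hx
      refine Finset.mem_filter.mpr ⟨h1 x hxB hle, ?_⟩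
      rw [sub_mul_mod' x b s hle, hxr]
    · intro x hx hle
      obtain ⟨hxB, hxr⟩ := Finset.mem_filter.mp hx
      have hle' : b * (s + k) ≤ x := by rw [Nat.mul_add]; exact hle
      refine Finset.mem_filter.mpr ⟨h2 x hxB hle, ?_⟩
      have : x - (b * s + b * k) = x - b * (s + k) := by rw [Nat.mul_add]
      rw [this, sub_mul_mod' x b (s + k) hle', hxr]
    · intro x hx y hy hxy
      obtain ⟨hxB, hxr⟩ := Finset.mem_filter.mp hx
      obtain ⟨hyB, hyr⟩ := Finset.mem_filter.mp hy
      have hgt := hdist x hxB y hyB hxy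
      -- x - y is a multiple of b
      have hxd := Nat.div_add_mod x b
      have hyd := Nat.div_add_mod y b
      have hxz : (x : ℤ) = b * (x / b : ℕ) + (x % b : ℕ) := by exact_mod_cast hxd.symm
      have hyz : (y : ℤ) = b * (y / b : ℕ) + (y % b : ℕ) := by exact_mod_cast hyd.symm
      have hrz : ((x % b : ℕ) : ℤ) = ((y % b : ℕ) : ℤ) := by
        rw [hxr, hyr]
      set q : ℤ := ((x / b : ℕ) : ℤ) - ((y / b : ℕ) : ℤ) with hq
      have hsub : (x : ℤ) - (y : ℤ) = (b : ℤ) * q := by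
        rw [hq]; rw [hxz, hyz, hrz]; ring
      have habs : |(x : ℤ) - (y : ℤ)| = (b : ℤ) * |q| := by
        rw [hsub, abs_mul, abs_of_nonneg (by positivity : (0:ℤ) ≤ (b:ℤ))]
      have hbgt : ((b * d : ℕ) : ℤ) = (b : ℤ) * (d : ℤ) := by push_cast; ring
      have hb0 : (0 : ℤ) < (b : ℤ) := by exact_mod_cast Nat.pos_of_ne_zero (by omega)
      have hdq : (d : ℤ) < |q| := by
        have h' : (b : ℤ) * (d : ℤ) < (b : ℤ) * |q| := by
          rw [← hbgt, ← habs]; exact hgt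
        exact lt_of_mul_lt_mul_left h' hb0.le
      have hkey : (b : ℤ) * ((d : ℤ) + 1) ≤ (b : ℤ) * |q| :=
        mul_le_mul_of_nonneg_left (by omega) hb0.le
      rw [habs]
      push_cast
      have hcz : (c : ℤ) < (b : ℤ) := by exact_mod_cast hc
      nlinarith [hkey, hcz]
    · simp [hn]

theorem max_hook_mult_of_b (s k d b c : ℕ) (hs : 2 ≤ s) (hk : 0 < k) (hd : 0 < d)
    (hcop : Nat.Coprime s k) (hb : 2 ≤ b) (hc : c < b) :
    ∀ H : ℕ, IsGreatest (HookLengths (b * s) (b * k) (b * d + c)) H ↔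
      IsGreatest (HookLengths (b * s) (b * k) (b * d)) H := by
  intro H
  rw [hook_sets_eq s k d b c hc]
end

section
/- Let s and k be coprime positive integers with s ≥ 2. Then the relation <_E is a strict total order on E: it is irreflexive (so, being transitive by construction, it is a strict partial order), and any two distinct elements of E are comparable under <_E. -/
/-- `P = P_{s,s+k}`: positive integers not expressible as `a*s + b*(s+k)`
with `a, b` nonnegative integers. -/
def Pset (s k : ℕ) : Set ℕ :=
  {x | 0 < x ∧ ¬∃ a b : ℕ, x = a * s + b * (s + k)}

/-- `E = P ∩ {1, …, s+k-1}`. -/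
def Eset (s k : ℕ) : Set ℕ := {x ∈ Pset s k | x ≤ s + k - 1}

/-- The covering relation on `E`: `x ⋖_E y` iff `y = x + s` or `y = x - k`. -/
def covE (s k : ℕ) (x y : ℕ) : Prop :=
  x ∈ Eset s k ∧ y ∈ Eset s k ∧ (y = x + s ∨ x = y + k)

/-- The order `<_E` on `E`: the transitive closure of `⋖_E`. -/
def ltE (s k : ℕ) : ℕ → ℕ → Prop := Relation.TransGen (covE s k)

/-- The covering relation on `P`: `x ⋖ y` iff `y - x ∈ {s, s+k}`. -/
def covP (s k : ℕ) (x y : ℕ) : Prop :=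
  x ∈ Pset s k ∧ y ∈ Pset s k ∧ (y = x + s ∨ y = x + (s + k))

/-- The order `<_P` on `P`: the transitive closure of `⋖`. -/
def ltP (s k : ℕ) : ℕ → ℕ → Prop := Relation.TransGen (covP s k)

/-- The order ideal `⟨x⟩ = {x - a*s - b*(s+k) : a, b ∈ ℤ_{≥0}} ∩ ℤ_{>0}`
generated by `x`. -/
def genIdeal (s k x : ℕ) : Set ℕ :=
  {y | 0 < y ∧ ∃ a b : ℕ, y + a * s + b * (s + k) = x}

section Aux

variable (s k : ℕ)

/-- Membership in `E` is: positive, at most `s+k-1`, and not a multiple of `s`. -/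
lemma memE_iff (hs : 2 ≤ s) (hk : 0 < k) (x : ℕ) :
    x ∈ Eset s k ↔ 0 < x ∧ x ≤ s + k - 1 ∧ ¬ s ∣ x := by
  constructor
  · rintro ⟨⟨hx0, hrep⟩, hxle⟩
    refine ⟨hx0, hxle, fun ⟨c, hc⟩ => hrep ⟨c, 0, by simp [hc, Nat.mul_comm]⟩⟩
  · rintro ⟨hx0, hxle, hnd⟩
    refine ⟨⟨hx0, ?_⟩, hxle⟩
    rintro ⟨a, b, hab⟩
    have hb : b = 0 := by
      by_contra hb0
      have h1 : s + k ≤ b * (s + k) := Nat.le_mul_of_pos_left _ (Nat.pos_of_ne_zero hb0)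
      omega
    exact hnd ⟨a, by rw [hab, hb]; ring⟩

/-- Successor existence: every element of `E` other than `k` is covered by something. -/
lemma succ_exists (hs : 2 ≤ s) (hk : 0 < k) (x : ℕ)
    (hx : x ∈ Eset s k) (hxk : x ≠ k) : ∃ y, covE s k x y := by
  obtain ⟨hx0, hxle, hnd⟩ := (memE_iff s k hs hk x).mp hx
  rcases lt_or_gt_of_ne hxk with h | h
  · refine ⟨x + s, hx, ?_, Or.inl rfl⟩
    refine (memE_iff s k hs hk _).mpr ⟨by omega, by omega, fun ⟨c, hc⟩ => hnd ?_⟩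
    cases c with
    | zero => omega
    | succ c => rw [Nat.mul_succ] at hc; exact ⟨c, by omega⟩
  · refine ⟨x - k, hx, ?_, Or.inr (by omega)⟩
    refine (memE_iff s k hs hk _).mpr ⟨by omega, by omega, fun hd => ?_⟩
    have := Nat.le_of_dvd (by omega) hd
    omega

end Aux

theorem ltE_total (s k : ℕ) (hs : 2 ≤ s) (hk : 0 < k) (hcop : Nat.Coprime s k) :
    (∀ x ∈ Eset s k, ¬ltE s k x x) ∧
    (∀ x ∈ Eset s k, ∀ y ∈ Eset s k, x ≠ y → ltE s k x y ∨ ltE s k y x) := by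
  set n := s + k with hn
  have hn1 : 1 < n := by omega
  haveI : NeZero n := ⟨by omega⟩
  haveI : Fact (1 < n) := ⟨hn1⟩
  have hcop' : Nat.Coprime s n := by
    rw [hn, Nat.add_comm]; exact Nat.coprime_add_self_right.mpr hcop
  set v : ZMod n := (s : ZMod n)⁻¹ with hv
  have hsv : (s : ZMod n) * v = 1 := ZMod.coe_mul_inv_eq_one s hcop'
  set g : ℕ → ℕ := fun x => ((x : ZMod n) * v).val with hg
  have hglt : ∀ x, g x < n := fun x => ZMod.val_lt _
  -- the cast of an element of E is nonzero
  have hcastE : ∀ x ∈ Eset s k, ((x : ZMod n) : ZMod n) ≠ 0 := by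
    intro x hx h0
    obtain ⟨hx0, hxle, -⟩ := (memE_iff s k hs hk x).mp hx
    have : ((x : ℕ) : ZMod n).val = x := ZMod.val_cast_of_lt (by omega)
    rw [h0, ZMod.val_zero] at this
    omega
  -- g is injective on E
  have hginj : ∀ x ∈ Eset s k, ∀ y ∈ Eset s k, g x = g y → x = y := by
    intro x hx y hy hxy
    obtain ⟨hx0, hxle, -⟩ := (memE_iff s k hs hk x).mp hx
    obtain ⟨hy0, hyle, -⟩ := (memE_iff s k hs hk y).mp hy
    have h1 : (x : ZMod n) * v = (y : ZMod n) * v := ZMod.val_injective n hxy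
    have h2 : (x : ZMod n) = (y : ZMod n) := by
      have := congrArg (· * (s : ZMod n)) h1
      simpa [mul_assoc, mul_comm v, hsv] using this
    have hx' : ((x : ℕ) : ZMod n).val = x := ZMod.val_cast_of_lt (by omega)
    have hy' : ((y : ℕ) : ZMod n).val = y := ZMod.val_cast_of_lt (by omega)
    rw [← hx', ← hy', h2]
  -- g k = n - 1
  have hgk : g k = n - 1 := by
    have hks : (k : ZMod n) = -(s : ZMod n) := by
      have : ((s : ℕ) : ZMod n) + ((k : ℕ) : ZMod n) = ((n : ℕ) : ZMod n) := by
        rw [hn]; push_cast; ring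
      rw [ZMod.natCast_self] at this
      linear_combination this
    have : (k : ZMod n) * v = ((n - 1 : ℕ) : ZMod n) := by
      have hcast : ((n - 1 : ℕ) : ZMod n) = -1 := by
        rw [Nat.cast_sub (by omega : 1 ≤ n), Nat.cast_one, ZMod.natCast_self, zero_sub]
      rw [hks, hcast, neg_mul, hsv]
    show ((k : ZMod n) * v).val = n - 1
    rw [this, ZMod.val_cast_of_lt (by omega)]
  -- covE step increments g by one
  have hstep : ∀ x y, covE s k x y → g y = g x + 1 := by
    intro x y ⟨hx, hy, hcase⟩
    have hyx : (y : ZMod n) = (x : ZMod n) + (s : ZMod n) := by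
      rcases hcase with h | h
      · rw [h]; push_cast; ring
      · have : (x : ZMod n) = (y : ZMod n) + (k : ZMod n) := by rw [h]; push_cast; ring
        have hsk : (s : ZMod n) + (k : ZMod n) = 0 := by
          have : ((s : ℕ) : ZMod n) + ((k : ℕ) : ZMod n) = ((n : ℕ) : ZMod n) := by
            rw [hn]; push_cast; ring
          rw [ZMod.natCast_self] at this; exact this
        linear_combination -this - hsk
    have hmul : (y : ZMod n) * v = (x : ZMod n) * v + 1 := by
      rw [hyx, add_mul, hsv]
    have hne : (y : ZMod n) * v ≠ 0 := by
      intro h0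
      apply hcastE y hy
      have := congrArg (· * (s : ZMod n)) h0
      simpa [mul_assoc, mul_comm v, hsv] using this
    have hval : g y = (g x + 1) % n := by
      show ((y : ZMod n) * v).val = _
      rw [hmul, ZMod.val_add]
      congr 1
      rw [ZMod.val_one]
    have hgy0 : g y ≠ 0 := by
      intro h0
      apply hne
      have h1 : g y = (0 : ZMod n).val := by rw [h0, ZMod.val_zero]
      exact ZMod.val_injective n h1
    have := hglt x
    rcases Nat.lt_or_ge (g x + 1) n with h | h
    · rw [hval, Nat.mod_eq_of_lt h]
    · exfalso
      have hgx : g x = n - 1 := by omega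
      have hmod : (g x + 1) % n = 0 := by
        rw [hgx]
        have hne1 : n - 1 + 1 = n := by omega
        rw [hne1, Nat.mod_self]
      exact hgy0 (by rw [hval, hmod])
  -- ltE strictly increases g
  have hmono : ∀ x y, ltE s k x y → g x < g y := by
    intro x y h
    induction h with
    | single h => rw [hstep _ _ h]; omega
    | tail _ h ih => rw [hstep _ _ h]; omega
  -- chain lemma
  have hmain : ∀ d x y, x ∈ Eset s k → y ∈ Eset s k → g y = g x + (d + 1) → ltE s k x y := by
    intro d
    induction d with
    | zero =>
      intro x y hx hy hgxy
      have hxk : x ≠ k := by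
        intro h; rw [h, hgk] at hgxy; have := hglt y; omega
      obtain ⟨x', hcov⟩ := succ_exists s k hs hk x hx hxk
      have hx'E : x' ∈ Eset s k := hcov.2.1
      have : g x' = g y := by rw [hstep _ _ hcov, hgxy]
      rw [hginj x' hx'E y hy this] at hcov
      exact Relation.TransGen.single hcov
    | succ d ih =>
      intro x y hx hy hgxy
      have hxk : x ≠ k := by
        intro h; rw [h, hgk] at hgxy; have := hglt y; omega
      obtain ⟨x', hcov⟩ := succ_exists s k hs hk x hx hxk
      have hx'E : x' ∈ Eset s k := hcov.2.1
      have : g y = g x' + (d + 1) := by rw [hstep _ _ hcov]; omega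
      exact Relation.TransGen.head hcov (ih x' y hx'E hy this)
  constructor
  · intro x _ h
    exact absurd (hmono x x h) (lt_irrefl _)
  · intro x hx y hy hxy
    have hgne : g x ≠ g y := fun h => hxy (hginj x hx y hy h)
    rcases Nat.lt_or_ge (g x) (g y) with h | h
    · exact Or.inl (hmain (g y - g x - 1) x y hx hy (by omega))
    · exact Or.inr (hmain (g x - g y - 1) y x hy hx (by omega))
end
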